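/- arXiv:2604.20469 — 8 statements merged into one kernel-verified Lean document; each statement's English description precedes it below -/
import Mathlib

section
/- Let E : ℝⁿ → ℝ be C^∞, everywhere positive and periodic, let μ > 0, and set s̃ := μ log E. Then φ := E/⟨E⟩ is C^∞, periodic, satisfies div(φ ∇s̃ − μ ∇φ) = 0 at every point and ⟨φ⟩ = 1; moreover, every C^∞ periodic function φ with div(φ ∇s̃ − μ ∇φ) = 0 and ⟨φ⟩ = 1 equals E/⟨E⟩. -/
open MeasureTheory

noncomputable section

/-- Partial derivative in the i-th coordinate of a function on ℝⁿ. -/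
def pd {n : ℕ} (i : Fin n) (f : (Fin n → ℝ) → ℝ) (ξ : Fin n → ℝ) : ℝ :=
  deriv (fun t => f (Function.update ξ i t)) (ξ i)

/-- Euclidean divergence of a vector field on ℝⁿ. -/
def divS {n : ℕ} (v : (Fin n → ℝ) → (Fin n → ℝ)) (ξ : Fin n → ℝ) : ℝ :=
  ∑ i, pd i (fun η => v η i) ξ

/-- Periodicity: ℓᵢ-periodic in the i-th coordinate for each i. -/
def PerS {n : ℕ} (ℓ : Fin n → ℝ) (f : (Fin n → ℝ) → ℝ) : Prop :=
  ∀ (ξ : Fin n → ℝ) (i : Fin n), f (Function.update ξ i (ξ i + ℓ i)) = f ξ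

/-- Mean over one periodicity cell. -/
def meanS {n : ℕ} (ℓ : Fin n → ℝ) (f : (Fin n → ℝ) → ℝ) : ℝ :=
  (1 / ∏ i, ℓ i) * ∫ ξ in Set.univ.pi fun i => Set.Ioc (0:ℝ) (ℓ i), f ξ

/-- Mean of an ℓ-periodic function of one real variable. -/
def mean1 (ℓ : ℝ) (f : ℝ → ℝ) : ℝ := (1 / ℓ) * ∫ y in (0:ℝ)..ℓ, f y

/-! ### Auxiliary lemmas -/

lemma pd_eq_fderiv {n : ℕ} (i : Fin n) {f : (Fin n → ℝ) → ℝ} {ξ : Fin n → ℝ}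
    (hf : DifferentiableAt ℝ f ξ) :
    pd i f ξ = fderiv ℝ f ξ (Pi.single i 1) := by
  have h : HasDerivAt (fun t => f (Function.update ξ i t))
      (fderiv ℝ f ξ (Pi.single i 1)) (ξ i) := by
    have h1 := hasDerivAt_update ξ i (ξ i)
    have h2 : HasFDerivAt f (fderiv ℝ f ξ) (Function.update ξ i (ξ i)) := by
      rw [Function.update_eq_self]; exact hf.hasFDerivAt
    simpa [Function.comp_def] using h2.comp_hasDerivAt (ξ i) h1
  exact h.deriv

lemma contDiff_pd {n : ℕ} (i : Fin n) {f : (Fin n → ℝ) → ℝ} (hf : ContDiff ℝ (⊤ : ℕ∞) f) :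
    ContDiff ℝ (⊤ : ℕ∞) (pd i f) := by
  have : pd i f = fun ξ => fderiv ℝ f ξ (Pi.single i 1) := by
    funext ξ; exact pd_eq_fderiv i (hf.differentiable (by simp) ξ)
  rw [this]
  exact (hf.fderiv_right (by simp)).clm_apply contDiff_const

lemma hasDerivAt_comp_update {n : ℕ} (i : Fin n) {f : (Fin n → ℝ) → ℝ} {ξ : Fin n → ℝ}
    (hf : DifferentiableAt ℝ f ξ) :
    HasDerivAt (fun t => f (Function.update ξ i t)) (pd i f ξ) (ξ i) := by
  rw [pd_eq_fderiv i hf]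
  have h2 : HasFDerivAt f (fderiv ℝ f ξ) (Function.update ξ i (ξ i)) := by
    rw [Function.update_eq_self]; exact hf.hasFDerivAt
  simpa [Function.comp_def] using h2.comp_hasDerivAt (ξ i) (hasDerivAt_update ξ i (ξ i))

section rules
variable {n : ℕ} {i : Fin n} {f g : (Fin n → ℝ) → ℝ} {ξ : Fin n → ℝ}

lemma pd_const (c : ℝ) : pd i (fun _ => c) ξ = 0 := by
  simp [pd]

lemma pd_mul (hf : DifferentiableAt ℝ f ξ) (hg : DifferentiableAt ℝ g ξ) :
    pd i (fun η => f η * g η) ξ = pd i f ξ * g ξ + f ξ * pd i g ξ := by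
  have h := (hasDerivAt_comp_update i hf).mul (hasDerivAt_comp_update i hg)
  rw [Function.update_eq_self] at h
  exact h.deriv

lemma pd_div (hf : DifferentiableAt ℝ f ξ) (hg : DifferentiableAt ℝ g ξ)
    (hg0 : g ξ ≠ 0) :
    pd i (fun η => f η / g η) ξ
      = (pd i f ξ * g ξ - f ξ * pd i g ξ) / (g ξ)^2 := by
  have h := (hasDerivAt_comp_update i hf).div (hasDerivAt_comp_update i hg)
    (by rwa [Function.update_eq_self])
  rw [Function.update_eq_self] at h
  exact h.deriv

lemma pd_div_const (c : ℝ) :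
    pd i (fun η => f η / c) ξ = pd i f ξ / c := by
  simp [pd, deriv_div_const]

lemma pd_log_mul (μ : ℝ) (hf : DifferentiableAt ℝ f ξ) (hf0 : f ξ ≠ 0) :
    pd i (fun η => μ * Real.log (f η)) ξ = μ * ((f ξ)⁻¹ * pd i f ξ) := by
  have h1 := hasDerivAt_comp_update i hf
  have h2 : HasDerivAt (fun t => Real.log (f (Function.update ξ i t)))
      ((f ξ)⁻¹ * pd i f ξ) (ξ i) := by
    have := (Real.hasDerivAt_log (by rwa [Function.update_eq_self])).comp (ξ i) h1
    rwa [Function.update_eq_self] at this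
  exact (h2.const_mul μ).deriv

end rules

section per
variable {n : ℕ} {ℓ : Fin n → ℝ} {f : (Fin n → ℝ) → ℝ}

lemma PerS.pd_per (hf : PerS ℓ f) (i : Fin n) : PerS ℓ (pd i f) := by
  intro ξ j
  rcases eq_or_ne j i with rfl | hj
  · have hupd : ∀ t, Function.update (Function.update ξ j (ξ j + ℓ j)) j t
        = Function.update ξ j t := by
      intro t; rw [Function.update_idem]
    have hperiodic : Function.Periodic (fun t => f (Function.update ξ j t)) (ℓ j) := by
      intro t
      have := hf (Function.update ξ j t) j
      rwa [Function.update_idem, Function.update_self] at this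
    simp only [pd, hupd, Function.update_self]
    have : (fun t => f (Function.update ξ j t))
        = fun t => f (Function.update ξ j (t + ℓ j)) := by
      funext t; exact (hperiodic t).symm
    conv_rhs => rw [this]
    exact (deriv_comp_add_const (fun t => f (Function.update ξ j t)) (ℓ j) (ξ j)).symm
  · simp only [pd]
    have hupd : ∀ t, Function.update (Function.update ξ j (ξ j + ℓ j)) i t
        = Function.update (Function.update ξ i t) j
            ((Function.update ξ i t) j + ℓ j) := by
      intro t
      rw [Function.update_comm hj.symm, Function.update_of_ne hj]
    have : (fun t => f (Function.update (Function.update ξ j (ξ j + ℓ j)) i t))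
        = fun t => f (Function.update ξ i t) := by
      funext t; rw [hupd t, hf]
    rw [this, Function.update_of_ne hj.symm]

lemma PerS.int_shift (hf : PerS ℓ f) (ξ : Fin n → ℝ) (i : Fin n) (k : ℤ) :
    f (Function.update ξ i (ξ i + k * ℓ i)) = f ξ := by
  induction k using Int.induction_on with
  | zero => simp
  | succ k ih =>
    have h := hf (Function.update ξ i (ξ i + (k : ℝ) * ℓ i)) i
    rw [Function.update_idem, Function.update_self] at h
    push_cast at ih ⊢
    rw [show ξ i + ((k : ℝ) + 1) * ℓ i = ξ i + (k : ℝ) * ℓ i + ℓ i from by ring]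
    exact h.trans ih
  | pred k ih =>
    have h := hf (Function.update ξ i (ξ i + (-(k : ℝ) - 1) * ℓ i)) i
    rw [Function.update_idem, Function.update_self] at h
    push_cast at ih ⊢
    rw [show ξ i + (-(k : ℝ)) * ℓ i = ξ i + (-(k : ℝ) - 1) * ℓ i + ℓ i from by ring] at ih
    exact h.symm.trans ih

lemma PerS.reduce (hf : PerS ℓ f) (ξ : Fin n → ℝ) :
    f (fun i => ξ i - ⌊ξ i / ℓ i⌋ * ℓ i) = f ξ := by
  have key : ∀ s : Finset (Fin n),
      f (fun i => if i ∈ s then ξ i - ⌊ξ i / ℓ i⌋ * ℓ i else ξ i) = f ξ := by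
    intro s
    induction s using Finset.induction_on with
    | empty => simp
    | @insert j s hj ih =>
      have heq : (fun i => if i ∈ insert j s then ξ i - ⌊ξ i / ℓ i⌋ * ℓ i else ξ i)
          = Function.update (fun i => if i ∈ s then ξ i - ⌊ξ i / ℓ i⌋ * ℓ i else ξ i)
              j ((fun i => if i ∈ s then ξ i - ⌊ξ i / ℓ i⌋ * ℓ i else ξ i) j
                  + ((-⌊ξ j / ℓ j⌋ : ℤ) : ℝ) * ℓ j) := by
        funext i
        rcases eq_or_ne i j with rfl | hij
        · rw [if_pos (Finset.mem_insert_self i s), Function.update_self]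
          simp only [if_neg hj]
          push_cast; ring
        · simp [Function.update_of_ne hij, Finset.mem_insert, hij]
      rw [heq, hf.int_shift, ih]
  have := key Finset.univ
  simpa using this

end per

section box
variable {n : ℕ} {ℓ : Fin n → ℝ}

lemma box_subset_Icc : (Set.univ.pi fun i => Set.Ioc (0:ℝ) (ℓ i)) ⊆ Set.Icc 0 ℓ := by
  rw [← Set.pi_univ_Icc]
  exact Set.pi_mono fun i _ => Set.Ioc_subset_Icc_self

lemma integrableOn_box {f : (Fin n → ℝ) → ℝ} (hf : Continuous f) :
    IntegrableOn f (Set.univ.pi fun i => Set.Ioc (0:ℝ) (ℓ i)) :=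
  (hf.integrableOn_Icc).mono_set box_subset_Icc

lemma zero_everywhere (hℓ : ∀ i, 0 < ℓ i) {h : (Fin n → ℝ) → ℝ}
    (hc : Continuous h) (h0 : ∀ ξ, 0 ≤ h ξ) (hper : PerS ℓ h)
    (hint : ∫ ξ in Set.univ.pi fun i => Set.Ioc (0:ℝ) (ℓ i), h ξ = 0) :
    ∀ ξ, h ξ = 0 := by
  intro ξ
  by_contra hne
  have hpos : 0 < h ξ := (h0 ξ).lt_of_ne (Ne.symm hne)
  set ξ' : Fin n → ℝ := fun i => ξ i - ⌊ξ i / ℓ i⌋ * ℓ i with hξ'def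
  have hξ' : h ξ' = h ξ := hper.reduce ξ
  have hmem : ∀ i, ξ' i ∈ Set.Ico 0 (ℓ i) := by
    intro i
    constructor
    · have h1 : (⌊ξ i / ℓ i⌋ : ℝ) * ℓ i ≤ (ξ i / ℓ i) * ℓ i :=
        mul_le_mul_of_nonneg_right (Int.floor_le _) (hℓ i).le
      rw [div_mul_cancel₀ _ (hℓ i).ne'] at h1
      simpa [hξ'def] using h1
    · have h1 : ξ i / ℓ i * ℓ i < ((⌊ξ i / ℓ i⌋ : ℝ) + 1) * ℓ i :=
        mul_lt_mul_of_pos_right (Int.lt_floor_add_one _) (hℓ i)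
      rw [div_mul_cancel₀ _ (hℓ i).ne'] at h1
      simp only [hξ'def]
      nlinarith
  have hcl : ξ' ∈ closure (Set.univ.pi fun i => Set.Ioo (0:ℝ) (ℓ i)) := by
    rw [closure_pi_set]
    intro i _
    show ξ' i ∈ closure (Set.Ioo 0 (ℓ i))
    rw [closure_Ioo (hℓ i).ne]
    exact ⟨(hmem i).1, (hmem i).2.le⟩
  have hopen : IsOpen {x : (Fin n → ℝ) | 0 < h x} := isOpen_lt continuous_const hc
  have hne' : ({x | 0 < h x} ∩ Set.univ.pi fun i => Set.Ioo (0:ℝ) (ℓ i)).Nonempty :=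
    mem_closure_iff.mp hcl _ hopen (by rw [Set.mem_setOf_eq, hξ']; exact hpos)
  set U := {x | 0 < h x} ∩ Set.univ.pi fun i => Set.Ioo (0:ℝ) (ℓ i) with hUdef
  have hUopen : IsOpen U := hopen.inter (isOpen_set_pi Set.finite_univ fun i _ => isOpen_Ioo)
  have hUpos : 0 < volume U := hUopen.measure_pos volume hne'
  have hUsubbox : U ⊆ Set.univ.pi fun i => Set.Ioc (0:ℝ) (ℓ i) :=
    Set.Subset.trans Set.inter_subset_right
      (Set.pi_mono fun i _ => Set.Ioo_subset_Ioc_self)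
  have hintgr : IntegrableOn h (Set.univ.pi fun i => Set.Ioc (0:ℝ) (ℓ i)) :=
    integrableOn_box hc
  have hae : h =ᵐ[volume.restrict (Set.univ.pi fun i => Set.Ioc (0:ℝ) (ℓ i))] 0 :=
    (integral_eq_zero_iff_of_nonneg (fun x => h0 x) hintgr).mp hint
  have hnull : volume.restrict (Set.univ.pi fun i => Set.Ioc (0:ℝ) (ℓ i))
      {x | h x ≠ 0} = 0 := by
    simpa [Filter.EventuallyEq, ae_iff] using hae
  have hle : volume.restrict (Set.univ.pi fun i => Set.Ioc (0:ℝ) (ℓ i)) U ≤ 0 :=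
    hnull ▸ measure_mono (fun x hx => ne_of_gt hx.1)
  rw [Measure.restrict_apply hUopen.measurableSet,
    Set.inter_eq_self_of_subset_left hUsubbox] at hle
  exact absurd (le_antisymm hle zero_le) hUpos.ne'

lemma meanS_pos (hℓ : ∀ i, 0 < ℓ i) {E : (Fin n → ℝ) → ℝ}
    (hc : Continuous E) (hEpos : ∀ ξ, 0 < E ξ) (hper : PerS ℓ E) :
    0 < meanS ℓ E := by
  have hint_nonneg : 0 ≤ ∫ ξ in Set.univ.pi fun i => Set.Ioc (0:ℝ) (ℓ i), E ξ :=
    setIntegral_nonneg (MeasurableSet.univ_pi fun i => measurableSet_Ioc)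
      (fun x _ => (hEpos x).le)
  have hint_ne : (∫ ξ in Set.univ.pi fun i => Set.Ioc (0:ℝ) (ℓ i), E ξ) ≠ 0 := by
    intro h0
    exact absurd (zero_everywhere hℓ hc (fun ξ => (hEpos ξ).le) hper h0 0)
      (hEpos 0).ne'
  have h1 : (0:ℝ) < 1 / ∏ i, ℓ i :=
    div_pos one_pos (Finset.prod_pos fun i _ => hℓ i)
  exact mul_pos h1 (hint_nonneg.lt_of_ne (Ne.symm hint_ne))

end box

lemma integral_pd_sum_zero {m : ℕ} (ℓ : Fin (m+1) → ℝ) (hℓ : ∀ i, 0 < ℓ i)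
    (f : Fin (m+1) → (Fin (m+1) → ℝ) → ℝ) (hf : ∀ i, ContDiff ℝ (⊤ : ℕ∞) (f i))
    (hper : ∀ i, PerS ℓ (f i)) :
    ∫ ξ in Set.univ.pi fun i => Set.Ioc (0:ℝ) (ℓ i), ∑ i, pd i (f i) ξ = 0 := by
  have hle : (0 : Fin (m+1) → ℝ) ≤ ℓ := fun i => (hℓ i).le
  have hsets : (Set.univ.pi fun i => Set.Ioc (0:ℝ) (ℓ i))
      =ᵐ[volume] Set.Icc (0 : Fin (m+1) → ℝ) ℓ := by
    rw [volume_pi]; exact Measure.univ_pi_Ioc_ae_eq_Icc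
  rw [setIntegral_congr_set hsets]
  have hint_eq : (fun x : Fin (m+1) → ℝ => ∑ i, pd i (f i) x)
      = fun x => ∑ i, fderiv ℝ (f i) x (Pi.single i 1) := by
    funext x
    exact Finset.sum_congr rfl fun i _ =>
      pd_eq_fderiv i ((hf i).differentiable (by simp) x)
  have hcont : Continuous fun x : Fin (m+1) → ℝ =>
      ∑ i, fderiv ℝ (f i) x (Pi.single i 1) := by
    rw [← hint_eq]
    exact continuous_finset_sum _ fun i _ => (contDiff_pd i (hf i)).continuous
  have hdiv := integral_divergence_of_hasFDerivAt_off_countable'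
    (0 : Fin (m+1) → ℝ) ℓ hle f (fun i x => fderiv ℝ (f i) x) ∅ Set.countable_empty
    (fun i => (hf i).continuous.continuousOn)
    (fun x _ i => ((hf i).differentiable (by simp) x).hasFDerivAt)
    (hcont.integrableOn_Icc)
  rw [hint_eq, hdiv]
  apply Finset.sum_eq_zero
  intro i _
  have hface : ∀ x : Fin m → ℝ,
      f i (Fin.insertNth i (ℓ i) x) = f i (Fin.insertNth i (0:ℝ) x) := by
    intro x
    have h := hper i (Fin.insertNth i (0:ℝ) x) i
    rw [Fin.insertNth_apply_same, zero_add, Fin.update_insertNth] at h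
    exact h
  rw [sub_eq_zero]
  exact setIntegral_congr_fun (measurableSet_Icc) fun x _ => hface x

/-- Key energy lemma: any smooth periodic solution has φ/E with vanishing partials. -/
lemma key_pd_zero {n : ℕ} {ℓ : Fin n → ℝ} (hℓ : ∀ i, 0 < ℓ i)
    {E : (Fin n → ℝ) → ℝ} (hE : ContDiff ℝ (⊤ : ℕ∞) E) (hEpos : ∀ ξ, 0 < E ξ)
    (hEper : PerS ℓ E) {μ : ℝ} (hμ : 0 < μ)
    {φ : (Fin n → ℝ) → ℝ} (hφ : ContDiff ℝ (⊤ : ℕ∞) φ) (hφper : PerS ℓ φ)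
    (hdiv : ∀ ξ, divS (fun η i =>
        φ η * pd i (fun ζ => μ * Real.log (E ζ)) η - μ * pd i φ η) ξ = 0) :
    ∀ (ξ : Fin n → ℝ) (i : Fin n), pd i (fun ζ => φ ζ / E ζ) ξ = 0 := by
  cases n with
  | zero => exact fun ξ i => i.elim0
  | succ m =>
    have hEne : ∀ ξ, E ξ ≠ 0 := fun ξ => (hEpos ξ).ne'
    have hw : ContDiff ℝ (⊤ : ℕ∞) (fun ζ => φ ζ / E ζ) := hφ.div hE hEne
    have hs : ContDiff ℝ (⊤ : ℕ∞) (fun ζ => μ * Real.log (E ζ)) :=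
      contDiff_const.mul (hE.log hEne)
    have hsper : PerS ℓ (fun ζ => μ * Real.log (E ζ)) := by
      intro ξ i
      show μ * Real.log (E _) = μ * Real.log (E ξ)
      rw [hEper]
    have hwper : PerS ℓ (fun ζ => φ ζ / E ζ) := by
      intro ξ i
      show φ _ / E _ = φ ξ / E ξ
      rw [hφper, hEper]
    have hVeq : ∀ (i : Fin (m+1)) (η : Fin (m+1) → ℝ),
        φ η * pd i (fun ζ => μ * Real.log (E ζ)) η - μ * pd i φ η
          = -(μ * E η * pd i (fun ζ => φ ζ / E ζ) η) := by
      intro i η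
      have hφd : DifferentiableAt ℝ φ η := hφ.differentiable (by simp) η
      have hEd : DifferentiableAt ℝ E η := hE.differentiable (by simp) η
      rw [pd_log_mul μ hEd (hEne η), pd_div hφd hEd (hEne η)]
      have h2 : E η ≠ 0 := hEne η
      field_simp
      ring
    have hVc : ∀ i : Fin (m+1), ContDiff ℝ (⊤ : ℕ∞)
        (fun η => φ η * pd i (fun ζ => μ * Real.log (E ζ)) η - μ * pd i φ η) :=
      fun i => (hφ.mul (contDiff_pd i hs)).sub (contDiff_const.mul (contDiff_pd i hφ))
    have hVper : ∀ i : Fin (m+1), PerS ℓ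
        (fun η => φ η * pd i (fun ζ => μ * Real.log (E ζ)) η - μ * pd i φ η) := by
      intro i ξ j
      show φ _ * pd i _ _ - μ * pd i φ _ = _
      rw [hφper ξ j, (hsper.pd_per i) ξ j, (hφper.pd_per i) ξ j]
    -- the vector field W i = w * V i
    have hWc : ∀ i : Fin (m+1), ContDiff ℝ (⊤ : ℕ∞) (fun η => (φ η / E η) *
        (φ η * pd i (fun ζ => μ * Real.log (E ζ)) η - μ * pd i φ η)) :=
      fun i => hw.mul (hVc i)
    have hWper : ∀ i : Fin (m+1), PerS ℓ (fun η => (φ η / E η) *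
        (φ η * pd i (fun ζ => μ * Real.log (E ζ)) η - μ * pd i φ η)) := by
      intro i ξ j
      show (φ _ / E _) * (φ _ * pd i (fun ζ => μ * Real.log (E ζ)) _ - μ * pd i φ _)
        = (φ ξ / E ξ) * (φ ξ * pd i (fun ζ => μ * Real.log (E ζ)) ξ - μ * pd i φ ξ)
      rw [hφper ξ j, hEper ξ j, (hsper.pd_per i) ξ j, (hφper.pd_per i) ξ j]
    have hint0 := integral_pd_sum_zero ℓ hℓ
      (fun i η => (φ η / E η) *
        (φ η * pd i (fun ζ => μ * Real.log (E ζ)) η - μ * pd i φ η))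
      hWc hWper
    have hptwise : ∀ ξ : Fin (m+1) → ℝ,
        ∑ i, pd i (fun η => (φ η / E η) *
          (φ η * pd i (fun ζ => μ * Real.log (E ζ)) η - μ * pd i φ η)) ξ
        = -(μ * E ξ * ∑ i, (pd i (fun ζ => φ ζ / E ζ) ξ)^2) := by
      intro ξ
      have hterm : ∀ i : Fin (m+1), pd i (fun η => (φ η / E η) *
            (φ η * pd i (fun ζ => μ * Real.log (E ζ)) η - μ * pd i φ η)) ξ
          = pd i (fun ζ => φ ζ / E ζ) ξ *
              (φ ξ * pd i (fun ζ => μ * Real.log (E ζ)) ξ - μ * pd i φ ξ)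
            + (φ ξ / E ξ) * pd i (fun η => φ η * pd i (fun ζ => μ * Real.log (E ζ)) η
                - μ * pd i φ η) ξ :=
        fun i => pd_mul (hw.differentiable (by simp) ξ) ((hVc i).differentiable (by simp) ξ)
      rw [Finset.sum_congr rfl fun i _ => hterm i, Finset.sum_add_distrib,
        ← Finset.mul_sum]
      have h2 : ∑ i, pd i (fun η => φ η * pd i (fun ζ => μ * Real.log (E ζ)) η
          - μ * pd i φ η) ξ = 0 := hdiv ξ
      rw [h2, mul_zero, add_zero]
      have h3 : ∀ i ∈ Finset.univ, pd i (fun ζ => φ ζ / E ζ) ξ *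
            (φ ξ * pd i (fun ζ => μ * Real.log (E ζ)) ξ - μ * pd i φ ξ)
          = -(μ * E ξ * (pd i (fun ζ => φ ζ / E ζ) ξ)^2) := by
        intro i _
        rw [hVeq i ξ]
        ring
      rw [Finset.sum_congr rfl h3]
      rw [Finset.mul_sum]
      simp
    have hmeas : MeasurableSet (Set.univ.pi fun i => Set.Ioc (0:ℝ) (ℓ i)) :=
      MeasurableSet.univ_pi fun i => measurableSet_Ioc
    have hint2 : ∫ ξ in Set.univ.pi fun i => Set.Ioc (0:ℝ) (ℓ i),
        (-(μ * E ξ * ∑ i, (pd i (fun ζ => φ ζ / E ζ) ξ)^2)) = 0 := by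
      calc ∫ ξ in Set.univ.pi fun i => Set.Ioc (0:ℝ) (ℓ i),
            (-(μ * E ξ * ∑ i, (pd i (fun ζ => φ ζ / E ζ) ξ)^2))
          = ∫ ξ in Set.univ.pi fun i => Set.Ioc (0:ℝ) (ℓ i),
            ∑ i, pd i (fun η => (φ η / E η) *
              (φ η * pd i (fun ζ => μ * Real.log (E ζ)) η - μ * pd i φ η)) ξ :=
            setIntegral_congr_fun hmeas fun ξ _ => (hptwise ξ).symm
        _ = 0 := hint0
    have hint3 : ∫ ξ in Set.univ.pi fun i => Set.Ioc (0:ℝ) (ℓ i),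
        μ * E ξ * ∑ i, (pd i (fun ζ => φ ζ / E ζ) ξ)^2 = 0 := by
      rw [integral_neg] at hint2
      exact neg_eq_zero.mp hint2
    have hcont : Continuous (fun ξ => μ * E ξ *
        ∑ i, (pd i (fun ζ => φ ζ / E ζ) ξ)^2) :=
      (continuous_const.mul hE.continuous).mul
        (continuous_finset_sum _ fun i _ => ((contDiff_pd i hw).continuous).pow 2)
    have hnonneg : ∀ ξ, 0 ≤ μ * E ξ * ∑ i, (pd i (fun ζ => φ ζ / E ζ) ξ)^2 :=
      fun ξ => mul_nonneg (mul_nonneg hμ.le (hEpos ξ).le)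
        (Finset.sum_nonneg fun i _ => sq_nonneg _)
    have hperh : PerS ℓ (fun ξ => μ * E ξ *
        ∑ i, (pd i (fun ζ => φ ζ / E ζ) ξ)^2) := by
      intro ξ j
      show μ * E _ * ∑ i, (pd i (fun ζ => φ ζ / E ζ) _)^2
        = μ * E ξ * ∑ i, (pd i (fun ζ => φ ζ / E ζ) ξ)^2
      rw [hEper ξ j]
      congr 1
      exact Finset.sum_congr rfl fun i _ => by rw [(hwper.pd_per i) ξ j]
    have hzero := zero_everywhere hℓ hcont hnonneg hperh hint3
    intro ξ i
    have h0 := hzero ξ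
    have hne : μ * E ξ ≠ 0 := (mul_pos hμ (hEpos ξ)).ne'
    have hsum0 : ∑ i, (pd i (fun ζ => φ ζ / E ζ) ξ)^2 = 0 :=
      (mul_eq_zero.mp h0).resolve_left hne
    have hsq := (Finset.sum_eq_zero_iff_of_nonneg fun i _ => sq_nonneg _).mp
      hsum0 i (Finset.mem_univ i)
    exact pow_eq_zero_iff (by norm_num : (2:ℕ) ≠ 0) |>.mp hsq

/-- with s̃ = μ log E, the function φ = E/⟨E⟩ is the unique C^∞ periodic
solution of div(φ ∇s̃ − μ ∇φ) = 0 with ⟨φ⟩ = 1. -/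
theorem stmt_7 (n : ℕ) (ℓ : Fin n → ℝ) (hℓ : ∀ i, 0 < ℓ i)
    (E : (Fin n → ℝ) → ℝ) (hE : ContDiff ℝ (⊤ : ℕ∞) E) (hEpos : ∀ ξ, 0 < E ξ)
    (hEper : PerS ℓ E) (μ : ℝ) (hμ : 0 < μ) :
    (ContDiff ℝ (⊤ : ℕ∞) (fun ξ => E ξ / meanS ℓ E) ∧
     PerS ℓ (fun ξ => E ξ / meanS ℓ E) ∧
     (∀ ξ, divS (fun η i =>
         (E η / meanS ℓ E) * pd i (fun ζ => μ * Real.log (E ζ)) η -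
           μ * pd i (fun ζ => E ζ / meanS ℓ E) η) ξ = 0) ∧
     meanS ℓ (fun ξ => E ξ / meanS ℓ E) = 1) ∧
    (∀ φ : (Fin n → ℝ) → ℝ, ContDiff ℝ (⊤ : ℕ∞) φ → PerS ℓ φ →
      (∀ ξ, divS (fun η i =>
          φ η * pd i (fun ζ => μ * Real.log (E ζ)) η - μ * pd i φ η) ξ = 0) →
      meanS ℓ φ = 1 → ∀ ξ, φ ξ = E ξ / meanS ℓ E) := by
  have hEne : ∀ ξ, E ξ ≠ 0 := fun ξ => (hEpos ξ).ne'
  have hcpos : 0 < meanS ℓ E := meanS_pos hℓ hE.continuous hEpos hEper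
  have hmeas : MeasurableSet (Set.univ.pi fun i => Set.Ioc (0:ℝ) (ℓ i)) :=
    MeasurableSet.univ_pi fun i => measurableSet_Ioc
  constructor
  · refine ⟨hE.div_const _, ?_, ?_, ?_⟩
    · intro ξ i
      show E _ / meanS ℓ E = E ξ / meanS ℓ E
      rw [hEper]
    · intro ξ
      have hcomp : ∀ (i : Fin n) (η : Fin n → ℝ),
          (E η / meanS ℓ E) * pd i (fun ζ => μ * Real.log (E ζ)) η -
            μ * pd i (fun ζ => E ζ / meanS ℓ E) η = 0 := by
        intro i η
        rw [pd_log_mul μ (hE.differentiable (by simp) η) (hEne η), pd_div_const]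
        field_simp [hEne η, hcpos.ne']
        ring
      show ∑ i, pd i (fun η => (E η / meanS ℓ E) * pd i (fun ζ => μ * Real.log (E ζ)) η -
          μ * pd i (fun ζ => E ζ / meanS ℓ E) η) ξ = 0
      apply Finset.sum_eq_zero
      intro i _
      have heq : (fun η => (E η / meanS ℓ E) * pd i (fun ζ => μ * Real.log (E ζ)) η -
          μ * pd i (fun ζ => E ζ / meanS ℓ E) η) = fun _ => (0:ℝ) :=
        funext fun η => hcomp i η
      rw [heq]
      exact pd_const 0
    · set c := meanS ℓ E with hcdef
      have : meanS ℓ (fun ξ => E ξ / c) = meanS ℓ E / c := by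
        simp only [meanS, integral_div]
        ring
      rw [this, ← hcdef, div_self hcpos.ne']
  · intro φ hφ hφper hdiv hmean
    have hkey := key_pd_zero hℓ hE hEpos hEper hμ hφ hφper hdiv
    have hwd : Differentiable ℝ (fun ζ => φ ζ / E ζ) :=
      (hφ.div hE hEne).differentiable (by simp)
    have hfd : ∀ ξ, fderiv ℝ (fun ζ => φ ζ / E ζ) ξ = 0 := by
      intro ξ
      apply ContinuousLinearMap.ext
      intro y
      rw [ContinuousLinearMap.zero_apply]
      conv_lhs => rw [pi_eq_sum_univ y]
      rw [map_sum]
      apply Finset.sum_eq_zero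
      intro i _
      rw [ContinuousLinearMap.map_smul]
      have hone : (fun j => if i = j then (1:ℝ) else 0) = Pi.single i 1 := by
        funext j
        simp [Pi.single_apply, eq_comm]
      rw [hone, ← pd_eq_fderiv i (hwd ξ), hkey ξ i, smul_zero]
    have hconst : ∀ ξ η : Fin n → ℝ, φ ξ / E ξ = φ η / E η := fun ξ η =>
      is_const_of_fderiv_eq_zero hwd hfd ξ η
    have hφeq : ∀ ξ, φ ξ = (φ 0 / E 0) * E ξ := by
      intro ξ
      rw [← hconst ξ 0, div_mul_cancel₀ _ (hEne ξ)]
    have hmean2 : meanS ℓ φ = (φ 0 / E 0) * meanS ℓ E := by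
      have hi : ∫ ξ in Set.univ.pi fun i => Set.Ioc (0:ℝ) (ℓ i), φ ξ
          = ∫ ξ in Set.univ.pi fun i => Set.Ioc (0:ℝ) (ℓ i), (φ 0 / E 0) * E ξ :=
        setIntegral_congr_fun hmeas fun ξ _ => hφeq ξ
      unfold meanS
      rw [hi, integral_const_mul]
      ring
    have hk : φ 0 / E 0 = 1 / meanS ℓ E := by
      rw [hmean2] at hmean
      rw [eq_div_iff hcpos.ne']
      exact hmean
    intro ξ
    rw [hφeq ξ, hk]
    ring
end
end

section
/- Let μ > 0, ū = (ū₁,…,ūₙ) ∈ ℝⁿ, and for each i = 1,…,n let Eᵢ : ℝ → ℝ be C^∞, positive and ℓᵢ-periodic, and let ψᵢ : ℝ → ℝ be a C¹ function satisfying ūᵢ ψᵢ(y) − μ ψᵢ'(y) = 1/Eᵢ(y) for all y ∈ ℝ. Define E(ξ) := ∏ᵢ Eᵢ(ξᵢ) and ψ(ξ) := ∏ᵢ ψᵢ(ξᵢ). Then the vector field ξ ↦ E(ξ)(ψ(ξ) ū − μ ∇ψ(ξ)) has identically vanishing divergence: div(E(ψ ū − μ ∇ψ)) = 0 on ℝⁿ.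 -/
open MeasureTheory

noncomputable section

/-- for product data E(ξ) = ∏ᵢ Eᵢ(ξᵢ), ψ(ξ) = ∏ᵢ ψᵢ(ξᵢ) with
ūᵢψᵢ − μψᵢ' = 1/Eᵢ, the vector field E(ψū − μ∇ψ) is divergence free. -/
theorem stmt_8 (n : ℕ) (ℓ : Fin n → ℝ) (hℓ : ∀ i, 0 < ℓ i)
    (μ : ℝ) (hμ : 0 < μ) (ub : Fin n → ℝ)
    (Ei : Fin n → ℝ → ℝ) (hEismooth : ∀ i, ContDiff ℝ (⊤ : ℕ∞) (Ei i))
    (hEipos : ∀ i y, 0 < Ei i y)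
    (hEiper : ∀ i, Function.Periodic (Ei i) (ℓ i))
    (ψi : Fin n → ℝ → ℝ) (hψiC1 : ∀ i, ContDiff ℝ 1 (ψi i))
    (hODE : ∀ i y, ub i * ψi i y - μ * deriv (ψi i) y = 1 / Ei i y) :
    ∀ ξ, divS (fun η k =>
        (∏ i, Ei i (η i)) *
          ((∏ i, ψi i (η i)) * ub k - μ * pd k (fun ζ => ∏ i, ψi i (ζ i)) η)) ξ = 0 := by
  have key : ∀ k : Fin n, ∀ η : Fin n → ℝ,
      (∏ i, Ei i (η i)) * ((∏ i, ψi i (η i)) * ub k - μ * pd k (fun ζ => ∏ i, ψi i (ζ i)) η)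
        = ∏ i ∈ Finset.univ.erase k, (Ei i (η i) * ψi i (η i)) := by
    intro k η
    have hψdiff : Differentiable ℝ (ψi k) := (hψiC1 k).differentiable one_ne_zero
    have hpd : pd k (fun ζ => ∏ i, ψi i (ζ i)) η
        = deriv (ψi k) (η k) * ∏ i ∈ Finset.univ.erase k, ψi i (η i) := by
      unfold pd
      have hfun : (fun t => ∏ i, ψi i (Function.update η k t i))
          = fun t => ψi k t * ∏ i ∈ Finset.univ.erase k, ψi i (η i) := by
        funext t
        rw [← Finset.mul_prod_erase Finset.univ _ (Finset.mem_univ k)]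
        simp only [Function.update_self]
        congr 1
        refine Finset.prod_congr rfl fun i hi => ?_
        rw [Function.update_of_ne (Finset.ne_of_mem_erase hi)]
      rw [hfun, deriv_mul_const (hψdiff (η k))]
    rw [hpd]
    have hEprod : (∏ i, Ei i (η i)) = Ei k (η k) * ∏ i ∈ Finset.univ.erase k, Ei i (η i) :=
      (Finset.mul_prod_erase Finset.univ _ (Finset.mem_univ k)).symm
    have hψprod : (∏ i, ψi i (η i)) = ψi k (η k) * ∏ i ∈ Finset.univ.erase k, ψi i (η i) :=
      (Finset.mul_prod_erase Finset.univ _ (Finset.mem_univ k)).symm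
    rw [hEprod, hψprod, Finset.prod_mul_distrib]
    have hEk : Ei k (η k) ≠ 0 := (hEipos k (η k)).ne'
    have h2 : Ei k (η k) * (ub k * ψi k (η k) - μ * deriv (ψi k) (η k)) = 1 := by
      rw [hODE k (η k)]
      field_simp
    linear_combination
      (∏ i ∈ Finset.univ.erase k, Ei i (η i)) * (∏ i ∈ Finset.univ.erase k, ψi i (η i)) * h2
  intro ξ
  unfold divS
  apply Finset.sum_eq_zero
  intro k _
  have hfun : (fun η : Fin n → ℝ =>
      (∏ i, Ei i (η i)) * ((∏ i, ψi i (η i)) * ub k - μ * pd k (fun ζ => ∏ i, ψi i (ζ i)) η))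
      = fun η => ∏ i ∈ Finset.univ.erase k, (Ei i (η i) * ψi i (η i)) := funext (key k)
  show pd k (fun η : Fin n → ℝ =>
      (∏ i, Ei i (η i)) * ((∏ i, ψi i (η i)) * ub k
        - μ * pd k (fun ζ => ∏ i, ψi i (ζ i)) η)) ξ = 0
  rw [hfun]
  unfold pd
  have hconst : (fun t => ∏ i ∈ Finset.univ.erase k,
        (Ei i (Function.update ξ k t i) * ψi i (Function.update ξ k t i)))
      = fun _ => ∏ i ∈ Finset.univ.erase k, (Ei i (ξ i) * ψi i (ξ i)) := by
    funext t
    refine Finset.prod_congr rfl fun i hi => ?_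
    rw [Function.update_of_ne (Finset.ne_of_mem_erase hi)]
  rw [hconst, deriv_const]
end
end

section
/- Let ℓ > 0, λ > 0, μ > 0, and let E : ℝ → ℝ be C^∞, positive and ℓ-periodic. Define ψ(y) := (1/μ) ∫₀^∞ e^{−λσ/μ} E(y+σ)^{−1} dσ. Then ψ is the unique ℓ-periodic C¹ solution of λψ − μψ' = 1/E on ℝ, and μ⟨Eψ⟩ = ∫₀^∞ e^{−λσ/μ} ⟨E(·) / E(· + σ)⟩ dσ, where ⟨E(·)/E(·+σ)⟩ := (1/ℓ)∫₀^ℓ E(y)/E(y+σ) dy; in particular ⟨Eψ⟩ > 0. -/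
open MeasureTheory

noncomputable section

namespace Stmt9Aux

open Set Real

lemma per_bounds (ℓ : ℝ) (hℓ : 0 < ℓ) (E : ℝ → ℝ) (hE : Continuous E) (hEpos : ∀ y, 0 < E y)
    (hEper : Function.Periodic E ℓ) :
    ∃ m M : ℝ, 0 < m ∧ (∀ y, m ≤ E y) ∧ (∀ y, E y ≤ M) := by
  obtain ⟨a, _, hmin⟩ := isCompact_Icc.exists_isMinOn (α := ℝ) (nonempty_Icc.mpr hℓ.le)
    (hE.continuousOn (s := Icc 0 ℓ))
  obtain ⟨b, _, hmax⟩ := isCompact_Icc.exists_isMaxOn (α := ℝ) (nonempty_Icc.mpr hℓ.le)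
    (hE.continuousOn (s := Icc 0 ℓ))
  refine ⟨E a, E b, hEpos a, fun y => ?_, fun y => ?_⟩
  · obtain ⟨z, hz, hzy⟩ := hEper.exists_mem_Ico₀ hℓ y
    rw [hzy]; exact hmin (Ico_subset_Icc_self hz)
  · obtain ⟨z, hz, hzy⟩ := hEper.exists_mem_Ico₀ hℓ y
    rw [hzy]; exact hmax (Ico_subset_Icc_self hz)

lemma intOn (lam μ m a : ℝ) (hlam : 0 < lam) (hμ : 0 < μ) (hm : 0 < m)
    (E : ℝ → ℝ) (hE : Continuous E) (hEpos : ∀ y, 0 < E y) (hmE : ∀ y, m ≤ E y) :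
    IntegrableOn (fun σ => Real.exp (-lam * σ / μ) / E σ) (Ioi a) := by
  have hb : 0 < lam / μ := div_pos hlam hμ
  refine Integrable.mono' (((exp_neg_integrableOn_Ioi a hb).const_mul (1/m)))
    ((Continuous.div (by continuity) hE (fun y => (hEpos y).ne')).aestronglyMeasurable) ?_
  filter_upwards with σ
  rw [Real.norm_eq_abs, abs_div, abs_of_pos (exp_pos _), abs_of_pos (hEpos σ)]
  have h1 : Real.exp (-lam * σ / μ) = Real.exp (-(lam/μ) * σ) := by ring_nf
  rw [h1, div_eq_mul_inv, mul_comm (1/m), one_div]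
  gcongr
  exact hmE σ

lemma shift (f : ℝ → ℝ) (y : ℝ) :
    ∫ σ in Ioi (0:ℝ), f (y + σ) = ∫ τ in Ioi y, f τ := by
  have h := (measurePreserving_add_left (volume : Measure ℝ) y).setIntegral_preimage_emb
    (measurableEmbedding_addLeft y) f (Ioi y)
  simpa using h

lemma split (h : ℝ → ℝ) (hi : ∀ a : ℝ, IntegrableOn h (Ioi a)) (y : ℝ) :
    (∫ τ in Ioi y, h τ) = (∫ τ in Ioi (0:ℝ), h τ) - ∫ τ in (0:ℝ)..y, h τ := by
  have key : ∀ a b : ℝ, a ≤ b → (∫ τ in Ioi a, h τ)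
      = (∫ τ in Ioc a b, h τ) + ∫ τ in Ioi b, h τ := by
    intro a b hab
    rw [← setIntegral_union (Ioc_disjoint_Ioi le_rfl) measurableSet_Ioi
      ((hi a).mono_set Ioc_subset_Ioi_self) (hi b), Ioc_union_Ioi_eq_Ioi hab]
  rcases le_total 0 y with hy | hy
  · rw [intervalIntegral.integral_of_le hy, key 0 y hy]; ring
  · rw [intervalIntegral.integral_symm, intervalIntegral.integral_of_le hy, key y 0 hy]; ring

end Stmt9Aux

open Stmt9Aux Set Real

/-- ψ(y) := (1/μ)∫₀^∞ e^{−λσ/μ} E(y+σ)^{−1} dσ is the unique ℓ-periodic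
C¹ solution of λψ − μψ' = 1/E, μ⟨Eψ⟩ = ∫₀^∞ e^{−λσ/μ}⟨E(·)/E(·+σ)⟩ dσ, and ⟨Eψ⟩ > 0. -/
theorem stmt_9 (ℓ lam μ : ℝ) (hℓ : 0 < ℓ) (hlam : 0 < lam) (hμ : 0 < μ)
    (E : ℝ → ℝ) (hE : ContDiff ℝ (⊤ : ℕ∞) E) (hEpos : ∀ y, 0 < E y)
    (hEper : Function.Periodic E ℓ) :
    let ψ : ℝ → ℝ := fun y => (1 / μ) * ∫ σ in Set.Ioi (0:ℝ), Real.exp (-lam * σ / μ) / E (y + σ)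
    (Function.Periodic ψ ℓ ∧ ContDiff ℝ 1 ψ ∧
      (∀ y, lam * ψ y - μ * deriv ψ y = 1 / E y)) ∧
    (∀ ψ' : ℝ → ℝ, Function.Periodic ψ' ℓ → ContDiff ℝ 1 ψ' →
      (∀ y, lam * ψ' y - μ * deriv ψ' y = 1 / E y) → ψ' = ψ) ∧
    μ * mean1 ℓ (fun y => E y * ψ y)
      = ∫ σ in Set.Ioi (0:ℝ), Real.exp (-lam * σ / μ) * mean1 ℓ (fun y => E y / E (y + σ)) ∧
    0 < mean1 ℓ (fun y => E y * ψ y) := by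
  intro ψ
  have hEc : Continuous E := hE.continuous
  obtain ⟨m, M, hm, hmE, hME⟩ := per_bounds ℓ hℓ E hEc hEpos hEper
  have hM : 0 < M := lt_of_lt_of_le hm (le_trans (hmE 0) (hME 0))
  set h : ℝ → ℝ := fun τ => Real.exp (-lam * τ / μ) / E τ with hh
  have hcont_h : Continuous h := Continuous.div (by continuity) hEc (fun y => (hEpos y).ne')
  have hint : ∀ a : ℝ, IntegrableOn h (Ioi a) :=
    fun a => intOn lam μ m a hlam hμ hm E hEc hEpos hmE
  have hintShift : ∀ y : ℝ, IntegrableOn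
      (fun σ => Real.exp (-lam * σ / μ) / E (y + σ)) (Ioi 0) := by
    intro y
    exact intOn lam μ m 0 hlam hμ hm (fun σ => E (y + σ)) (by continuity)
      (fun σ => hEpos _) (fun σ => hmE _)
  set H : ℝ → ℝ := fun y => ∫ τ in Ioi y, h τ with hH
  have hHd : ∀ y : ℝ, HasDerivAt H (-(h y)) y := by
    intro y
    have he : ∀ z : ℝ, H z = (∫ τ in Ioi (0:ℝ), h τ) - ∫ τ in (0:ℝ)..z, h τ :=
      fun z => split h hint z
    have hd : HasDerivAt (fun z => (∫ τ in Ioi (0:ℝ), h τ) - ∫ τ in (0:ℝ)..z, h τ)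
        (0 - h y) y := by
      exact (hasDerivAt_const y _).sub
        (intervalIntegral.integral_hasDerivAt_right (hcont_h.intervalIntegrable 0 y)
          hcont_h.aestronglyMeasurable.stronglyMeasurableAtFilter hcont_h.continuousAt)
    simpa [funext he] using hd
  -- key formula ψ y = (1/μ) e^{lam y/μ} H y
  have hψeq : ∀ y : ℝ, ψ y = (1 / μ) * (Real.exp (lam * y / μ) * H y) := by
    intro y
    have h1 : (fun σ => Real.exp (-lam * σ / μ) / E (y + σ))
        = fun σ => (fun τ => Real.exp (lam * y / μ) * h τ) (y + σ) := by
      funext σ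
      simp only [hh]
      rw [← mul_div_assoc, ← Real.exp_add]
      ring_nf
    simp only [ψ, h1, shift (fun τ => Real.exp (lam * y / μ) * h τ) y,
      MeasureTheory.integral_const_mul]
    rfl
  have hψd : ∀ y : ℝ, HasDerivAt ψ (lam / μ * ψ y - 1 / μ * (1 / E y)) y := by
    intro y
    have hexp : HasDerivAt (fun z => Real.exp (lam * z / μ))
        (lam / μ * Real.exp (lam * y / μ)) y := by
      have : HasDerivAt (fun z : ℝ => lam * z / μ) (lam / μ) y := by
        simpa using ((hasDerivAt_id y).const_mul lam).div_const μ
      simpa [Function.comp_def, mul_comm] using (Real.hasDerivAt_exp (lam * y / μ)).comp y this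
    have hprod := (hexp.mul (hHd y)).const_mul (1 / μ)
    have heq : (fun z => (1 / μ) * (Real.exp (lam * z / μ) * H z)) = ψ := by
      funext z; rw [hψeq z]
    simp only [Pi.mul_apply] at hprod
    rw [heq] at hprod
    have hEy : Real.exp (lam * y / μ) * h y = 1 / E y := by
      simp only [hh]
      rw [mul_div_assoc', ← Real.exp_add]
      have : lam * y / μ + -lam * y / μ = 0 := by ring
      rw [this, Real.exp_zero]
    refine hprod.congr_deriv ?_
    rw [hψeq y, ← hEy]
    ring
  have hψder : ∀ y : ℝ, deriv ψ y = lam / μ * ψ y - 1 / μ * (1 / E y) :=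
    fun y => (hψd y).deriv
  have hψdiff : Differentiable ℝ ψ := fun y => (hψd y).differentiableAt
  have hψcont : Continuous ψ := hψdiff.continuous
  have hψper : Function.Periodic ψ ℓ := by
    intro y
    simp only [ψ]
    congr 1
    refine MeasureTheory.integral_congr_ae (Filter.Eventually.of_forall fun σ => ?_)
    have h2 : y + ℓ + σ = y + σ + ℓ := by ring
    simp only [h2]
    rw [hEper (y + σ)]
  have hψC1 : ContDiff ℝ 1 ψ := by
    rw [contDiff_one_iff_deriv]
    refine ⟨hψdiff, ?_⟩
    have : deriv ψ = fun y => lam / μ * ψ y - 1 / μ * (1 / E y) := funext hψder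
    rw [this]
    exact (continuous_const.mul hψcont).sub
      (continuous_const.mul (continuous_const.div hEc (fun y => (hEpos y).ne')))
  have hψode : ∀ y, lam * ψ y - μ * deriv ψ y = 1 / E y := by
    intro y
    rw [hψder y]
    field_simp
    ring
  refine ⟨⟨hψper, hψC1, hψode⟩, ?_, ?_, ?_⟩
  · -- uniqueness
    intro ψ' hper' hC1' hode'
    have hdiff' : Differentiable ℝ ψ' := hC1'.differentiable one_ne_zero
    set φ : ℝ → ℝ := fun y => ψ' y - ψ y with hφ
    have hφd : ∀ y : ℝ, HasDerivAt φ (lam / μ * φ y) y := by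
      intro y
      have h1' : HasDerivAt ψ' (deriv ψ' y) y := (hdiff' y).hasDerivAt
      have h2' := (h1'.sub (hψd y))
      have h3' : deriv ψ' y - (lam / μ * ψ y - 1 / μ * (1 / E y)) = lam / μ * φ y := by
        have hd : deriv ψ' y = (lam * ψ' y - 1 / E y) / μ :=
          eq_div_of_mul_eq hμ.ne' (by linarith [hode' y])
        rw [hd, hφ]
        ring
      rwa [h3'] at h2'
    set g : ℝ → ℝ := fun y => φ y * Real.exp (-(lam / μ) * y) with hg
    have hgd : ∀ y : ℝ, HasDerivAt g 0 y := by
      intro y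
      have hexp : HasDerivAt (fun z => Real.exp (-(lam / μ) * z))
          (-(lam / μ) * Real.exp (-(lam / μ) * y)) y := by
        have : HasDerivAt (fun z : ℝ => -(lam / μ) * z) (-(lam / μ)) y := by
          simpa using (hasDerivAt_id y).const_mul (-(lam / μ))
        simpa [Function.comp_def, mul_comm] using
          (Real.hasDerivAt_exp (-(lam / μ) * y)).comp y this
      have := (hφd y).mul hexp
      exact this.congr_deriv (by ring)
    have hgconst : ∀ y : ℝ, g y = g 0 :=
      fun y => is_const_of_deriv_eq_zero (fun z => (hgd z).differentiableAt)
        (fun z => (hgd z).deriv) y 0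
    have hφexp : ∀ y : ℝ, φ y = φ 0 * Real.exp ((lam / μ) * y) := by
      intro y
      have h0 := hgconst y
      simp only [hg] at h0
      have h1 : φ y * Real.exp (-(lam / μ) * y) * Real.exp ((lam / μ) * y)
          = φ 0 * Real.exp (-(lam / μ) * 0) * Real.exp ((lam / μ) * y) := by rw [h0]
      have h2 : -(lam / μ) * y + lam / μ * y = 0 := by ring
      rw [mul_assoc, ← Real.exp_add, h2, Real.exp_zero, mul_one] at h1
      rw [h1]
      norm_num
    have hφper : φ ℓ = φ 0 := by
      simp only [hφ]
      rw [show ψ' ℓ = ψ' (0 + ℓ) by norm_num, hper' 0,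
        show ψ ℓ = ψ (0 + ℓ) by norm_num, hψper 0]
    have hφ0 : φ 0 = 0 := by
      have h1' := hφexp ℓ
      rw [hφper] at h1'
      have hgt : (1:ℝ) < Real.exp ((lam / μ) * ℓ) :=
        Real.one_lt_exp_iff.mpr (by positivity)
      by_contra hne
      rcases lt_or_gt_of_ne hne with hlt | hgt2
      · linarith [mul_lt_mul_of_neg_left hgt hlt]
      · linarith [mul_lt_mul_of_pos_left hgt hgt2]
    funext y
    have := hφexp y
    rw [hφ0] at this
    simp only [hφ] at this
    linarith [this]
  · -- mean identity
    set F : ℝ → ℝ → ℝ := fun y σ => Real.exp (-lam * σ / μ) * (E y / E (y + σ)) with hF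
    have hFcont : Continuous (Function.uncurry F) :=
      (Real.continuous_exp.comp
        ((continuous_const.mul (continuous_snd : Continuous fun p : ℝ × ℝ => p.2)).div_const μ)).mul
        ((hEc.comp (continuous_fst : Continuous fun p : ℝ × ℝ => p.1)).div
          (hEc.comp (continuous_fst.add continuous_snd)) (fun p => (hEpos _).ne'))
    have hFint : Integrable (Function.uncurry F)
        ((volume.restrict (Ioc (0:ℝ) ℓ)).prod (volume.restrict (Ioi (0:ℝ)))) := by
      refine Integrable.mono'
        (g := fun p : ℝ × ℝ => (fun _ : ℝ => M / m) p.1 * (fun σ => Real.exp (-(lam/μ) * σ)) p.2)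
        (Integrable.mul_prod (integrable_const _) (exp_neg_integrableOn_Ioi 0 (div_pos hlam hμ)))
        hFcont.aestronglyMeasurable ?_
      filter_upwards with p
      simp only [Function.uncurry, hF]
      rw [Real.norm_eq_abs, abs_mul, abs_of_pos (exp_pos _),
        abs_of_pos (div_pos (hEpos _) (hEpos _)),
        show Real.exp (-lam * p.2 / μ) = Real.exp (-(lam/μ) * p.2) by ring_nf,
        mul_comm (M / m)]
      gcongr
      · exact hME _
      · exact hmE _
    have hswap : (∫ y in Ioc (0:ℝ) ℓ, ∫ σ in Ioi (0:ℝ), F y σ)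
        = ∫ σ in Ioi (0:ℝ), ∫ y in Ioc (0:ℝ) ℓ, F y σ :=
      MeasureTheory.integral_integral_swap hFint
    have hEy_ψ : ∀ y, E y * ψ y = (1/μ) * ∫ σ in Ioi (0:ℝ), F y σ := by
      intro y
      have h1 : ∫ σ in Ioi (0:ℝ), F y σ
          = E y * ∫ σ in Ioi (0:ℝ), Real.exp (-lam * σ / μ) / E (y + σ) := by
        rw [← MeasureTheory.integral_const_mul]
        refine MeasureTheory.integral_congr_ae (Filter.Eventually.of_forall fun σ => ?_)
        simp only [hF]
        ring
      rw [h1]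
      simp only [ψ]
      ring
    simp only [mean1]
    calc μ * (1/ℓ * ∫ y in (0:ℝ)..ℓ, E y * ψ y)
        = 1/ℓ * ∫ y in Ioc (0:ℝ) ℓ, ∫ σ in Ioi (0:ℝ), F y σ := by
          rw [intervalIntegral.integral_of_le hℓ.le,
            show (fun y => E y * ψ y) = fun y => (1/μ) * ∫ σ in Ioi (0:ℝ), F y σ
              from funext hEy_ψ,
            MeasureTheory.integral_const_mul]
          field_simp
      _ = 1/ℓ * ∫ σ in Ioi (0:ℝ), ∫ y in Ioc (0:ℝ) ℓ, F y σ := by rw [hswap]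
      _ = ∫ σ in Ioi (0:ℝ), Real.exp (-lam * σ / μ)
            * (1/ℓ * ∫ y in (0:ℝ)..ℓ, E y / E (y + σ)) := by
          rw [← MeasureTheory.integral_const_mul]
          refine MeasureTheory.integral_congr_ae (Filter.Eventually.of_forall fun σ => ?_)
          show (1/ℓ * ∫ y in Ioc (0:ℝ) ℓ, F y σ)
            = Real.exp (-lam * σ / μ) * (1/ℓ * ∫ y in (0:ℝ)..ℓ, E y / E (y + σ))
          rw [intervalIntegral.integral_of_le hℓ.le,
            show (fun y => F y σ) = fun y => Real.exp (-lam * σ / μ) * (E y / E (y + σ))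
              from rfl,
            MeasureTheory.integral_const_mul]
          ring
  · -- positivity
    have hψpos : ∀ y, 0 < ψ y := by
      intro y
      have hIpos : 0 < ∫ σ in Ioi (0:ℝ), Real.exp (-lam * σ / μ) / E (y + σ) := by
        rw [setIntegral_pos_iff_support_of_nonneg_ae
          (Filter.Eventually.of_forall fun σ => (div_pos (exp_pos _) (hEpos _)).le)
          (hintShift y)]
        have hsupp : (Function.support fun σ => Real.exp (-lam * σ / μ) / E (y + σ))
            ∩ Ioi 0 = Ioi 0 := by
          refine inter_eq_right.mpr fun σ _ => ?_
          exact (div_pos (exp_pos _) (hEpos _)).ne'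
        rw [hsupp, Real.volume_Ioi]
        simp
      have h2 := mul_pos (by positivity : (0:ℝ) < 1/μ) hIpos
      simpa [ψ] using h2
    have hcontEψ : Continuous fun y => E y * ψ y := hEc.mul hψcont
    have hpos := intervalIntegral.intervalIntegral_pos_of_pos_on
      (hcontEψ.intervalIntegrable 0 ℓ) (fun x _ => mul_pos (hEpos x) (hψpos x)) hℓ
    simp only [mean1]
    exact mul_pos (by positivity) hpos
end
end

section
/- Let μ > 0 and ū = (ū₁,…,ūₙ) with every ūᵢ > 0. For i = 1,…,n let Eᵢ : ℝ → ℝ be C^∞, positive and ℓᵢ-periodic, and let ψᵢ be the unique ℓᵢ-periodic C¹ solution of ūᵢψᵢ − μψᵢ' = 1/Eᵢ. Set E(ξ) := ∏ᵢ Eᵢ(ξᵢ), ψ(ξ) := ∏ᵢ ψᵢ(ξᵢ), and s̃ := μ log E. Then ⟨Eψ⟩ > 0 and for each j = 1,…,n the drift component V̄ⱼ := ⟨Eψ ∂_{ξⱼ}s̃⟩ / ⟨Eψ⟩ equals 1/⟨Eⱼψⱼ⟩ − ūⱼ, where ⟨Eⱼψⱼ⟩ := (1/ℓⱼ)∫₀^{ℓⱼ}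 Eⱼψⱼ. -/
open MeasureTheory

noncomputable section

lemma indicator_pi_prod {n : ℕ} (s : Fin n → Set ℝ) (f : Fin n → ℝ → ℝ) (ξ : Fin n → ℝ) :
    (Set.univ.pi s).indicator (fun ξ => ∏ i, f i (ξ i)) ξ = ∏ i, (s i).indicator (f i) (ξ i) := by
  by_cases h : ξ ∈ Set.univ.pi s
  · rw [Set.indicator_of_mem h]
    exact Finset.prod_congr rfl fun i _ => (Set.indicator_of_mem (h i (Set.mem_univ i)) _).symm
  · rw [Set.indicator_of_notMem h]
    rw [Set.mem_univ_pi] at h; push_neg at h; obtain ⟨i, hi⟩ := h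
    exact (Finset.prod_eq_zero (Finset.mem_univ i) (Set.indicator_of_notMem hi _)).symm

lemma meanS_prod {n : ℕ} (ℓ : Fin n → ℝ) (hℓ : ∀ i, 0 < ℓ i) (f : Fin n → ℝ → ℝ)
    (hf : ∀ i, Continuous (f i)) :
    meanS ℓ (fun ξ => ∏ i, f i (ξ i)) = ∏ i, mean1 (ℓ i) (f i) := by
  unfold meanS mean1
  have hset : MeasurableSet (Set.univ.pi fun i => Set.Ioc (0:ℝ) (ℓ i)) :=
    MeasurableSet.univ_pi fun i => measurableSet_Ioc
  rw [← integral_indicator hset]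
  have h1 : (Set.univ.pi fun i => Set.Ioc (0:ℝ) (ℓ i)).indicator (fun ξ => ∏ i, f i (ξ i))
      = fun ξ => ∏ i, (Set.Ioc (0:ℝ) (ℓ i)).indicator (f i) (ξ i) :=
    funext (indicator_pi_prod _ _)
  rw [h1, integral_fintype_prod_volume_eq_prod (f := fun i => (Set.Ioc (0:ℝ) (ℓ i)).indicator (f i))]
  have h2 : ∀ i, ∫ x, (Set.Ioc (0:ℝ) (ℓ i)).indicator (f i) x = ∫ y in (0:ℝ)..(ℓ i), f i y := by
    intro i
    rw [integral_indicator measurableSet_Ioc, intervalIntegral.integral_of_le (hℓ i).le]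
  simp_rw [h2]
  rw [Finset.prod_mul_distrib]
  congr 1
  rw [Finset.prod_div_distrib, Finset.prod_const_one]

lemma psi_pos (ℓ μ u : ℝ) (hℓ : 0 < ℓ) (hμ : 0 < μ) (u_pos : 0 < u)
    (E ψ : ℝ → ℝ) (hEpos : ∀ y, 0 < E y) (hψ : ContDiff ℝ 1 ψ)
    (hper : Function.Periodic ψ ℓ)
    (hODE : ∀ y, u * ψ y - μ * deriv ψ y = 1 / E y) : ∀ y, 0 < ψ y := by
  obtain ⟨x₀, hx₀, hmin⟩ := (isCompact_Icc (a := (0:ℝ)) (b := ℓ)).exists_isMinOn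
    (Set.nonempty_Icc.2 hℓ.le) hψ.continuous.continuousOn
  have hglob : ∀ y, ψ x₀ ≤ ψ y := by
    intro y
    obtain ⟨z, hz, hzy⟩ := hper.exists_mem_Ico₀ hℓ y
    rw [hzy]
    exact hmin (Set.mem_Icc.2 ⟨hz.1, hz.2.le⟩)
  have hloc : IsLocalMin ψ x₀ := Filter.Eventually.of_forall hglob
  have hd : deriv ψ x₀ = 0 := hloc.deriv_eq_zero
  have h0 : 0 < ψ x₀ := by
    have := hODE x₀
    rw [hd] at this
    have hE1 : 0 < 1 / E x₀ := div_pos one_pos (hEpos x₀)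
    nlinarith [this]
  intro y; exact lt_of_lt_of_le h0 (hglob y)

lemma key1 (ℓ μ u : ℝ) (hℓ : 0 < ℓ) (E ψ : ℝ → ℝ) (hE : ContDiff ℝ (⊤ : ℕ∞) E)
    (hEpos : ∀ y, 0 < E y) (hψ : ContDiff ℝ 1 ψ)
    (hEper : Function.Periodic E ℓ) (hψper : Function.Periodic ψ ℓ)
    (hODE : ∀ y, u * ψ y - μ * deriv ψ y = 1 / E y) :
    mean1 ℓ (fun y => μ * deriv E y * ψ y) = 1 - u * mean1 ℓ (fun y => E y * ψ y) := by
  have hEd : Differentiable ℝ E := hE.differentiable (by simp)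
  have hψd : Differentiable ℝ ψ := hψ.differentiable one_ne_zero
  have hEdc : Continuous (deriv E) := hE.continuous_deriv (by simp)
  have hψdc : Continuous (deriv ψ) := hψ.continuous_deriv le_rfl
  have hFTC : ∫ y in (0:ℝ)..ℓ, (deriv E y * ψ y + E y * deriv ψ y) =
      E ℓ * ψ ℓ - E 0 * ψ 0 := by
    apply intervalIntegral.integral_eq_sub_of_hasDerivAt
    · intro x _
      exact ((hEd x).hasDerivAt).mul ((hψd x).hasDerivAt)
    · exact (((hEdc.mul hψ.continuous).add (hE.continuous.mul hψdc))).intervalIntegrable _ _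
  have hzero : ∫ y in (0:ℝ)..ℓ, (deriv E y * ψ y + E y * deriv ψ y) = 0 := by
    have hEl : E ℓ = E 0 := by simpa using hEper 0
    have hψl : ψ ℓ = ψ 0 := by simpa using hψper 0
    rw [hFTC, hEl, hψl]; ring
  have hpt : ∀ y, μ * deriv E y * ψ y =
      μ * (deriv E y * ψ y + E y * deriv ψ y) - (u * (E y * ψ y) - 1) := by
    intro y
    have h := hODE y
    have hEne : E y ≠ 0 := (hEpos y).ne'
    field_simp at h ⊢
    nlinarith [h]
  unfold mean1
  rw [intervalIntegral.integral_congr (g := fun y =>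
      μ * (deriv E y * ψ y + E y * deriv ψ y) - (u * (E y * ψ y) - 1)) (fun y _ => hpt y)]
  have i1 : IntervalIntegrable (fun y => μ * (deriv E y * ψ y + E y * deriv ψ y)) volume 0 ℓ :=
    (continuous_const.mul ((hEdc.mul hψ.continuous).add
      (hE.continuous.mul hψdc))).intervalIntegrable _ _
  have i2 : IntervalIntegrable (fun y => u * (E y * ψ y)) volume 0 ℓ :=
    (continuous_const.mul (hE.continuous.mul hψ.continuous)).intervalIntegrable _ _
  rw [intervalIntegral.integral_sub i1 (i2.sub intervalIntegrable_const),
    intervalIntegral.integral_sub i2 intervalIntegrable_const,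
    intervalIntegral.integral_const_mul, intervalIntegral.integral_const_mul, hzero,
    intervalIntegral.integral_const]
  field_simp
  rw [smul_eq_mul]; ring

/-- for product data E, ψ built from the unique periodic solutions of
ūᵢψᵢ − μψᵢ' = 1/Eᵢ (ūᵢ > 0), one has ⟨Eψ⟩ > 0 and the drift components
V̄ⱼ = ⟨Eψ ∂ⱼs̃⟩/⟨Eψ⟩ equal 1/⟨Eⱼψⱼ⟩ − ūⱼ, where s̃ = μ log E. -/
theorem stmt_11 (n : ℕ) (ℓ : Fin n → ℝ) (hℓ : ∀ i, 0 < ℓ i)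
    (μ : ℝ) (hμ : 0 < μ) (ub : Fin n → ℝ) (hub : ∀ i, 0 < ub i)
    (Ei : Fin n → ℝ → ℝ) (hEismooth : ∀ i, ContDiff ℝ (⊤ : ℕ∞) (Ei i))
    (hEipos : ∀ i y, 0 < Ei i y)
    (hEiper : ∀ i, Function.Periodic (Ei i) (ℓ i))
    (ψi : Fin n → ℝ → ℝ) (hψiC1 : ∀ i, ContDiff ℝ 1 (ψi i))
    (hψiper : ∀ i, Function.Periodic (ψi i) (ℓ i))
    (hODE : ∀ i y, ub i * ψi i y - μ * deriv (ψi i) y = 1 / Ei i y)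
    (huniq : ∀ i, ∀ ψ' : ℝ → ℝ, ContDiff ℝ 1 ψ' → Function.Periodic ψ' (ℓ i) →
      (∀ y, ub i * ψ' y - μ * deriv ψ' y = 1 / Ei i y) → ψ' = ψi i) :
    0 < meanS ℓ (fun ξ => (∏ i, Ei i (ξ i)) * (∏ i, ψi i (ξ i))) ∧
    ∀ j : Fin n,
      meanS ℓ (fun ξ => (∏ i, Ei i (ξ i)) * (∏ i, ψi i (ξ i)) *
          pd j (fun ζ => μ * Real.log (∏ i, Ei i (ζ i))) ξ) /
        meanS ℓ (fun ξ => (∏ i, Ei i (ξ i)) * (∏ i, ψi i (ξ i)))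
      = 1 / mean1 (ℓ j) (fun y => Ei j y * ψi j y) - ub j := by
  set F : Fin n → ℝ → ℝ := fun i y => Ei i y * ψi i y with hF
  have hψpos : ∀ i y, 0 < ψi i y := fun i =>
    psi_pos (ℓ i) μ (ub i) (hℓ i) hμ (hub i) (Ei i) (ψi i) (hEipos i) (hψiC1 i)
      (hψiper i) (hODE i)
  have hFc : ∀ i, Continuous (F i) := fun i => (hEismooth i).continuous.mul (hψiC1 i).continuous
  have hM : ∀ i, 0 < mean1 (ℓ i) (F i) := by
    intro i
    have hI : 0 < ∫ y in (0:ℝ)..(ℓ i), F i y :=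
      intervalIntegral.intervalIntegral_pos_of_pos ((hFc i).intervalIntegrable _ _)
        (fun y => mul_pos (hEipos i y) (hψpos i y)) (hℓ i)
    exact mul_pos (div_pos one_pos (hℓ i)) hI
  have hdenf : (fun ξ : Fin n → ℝ => (∏ i, Ei i (ξ i)) * (∏ i, ψi i (ξ i)))
      = fun ξ => ∏ i, F i (ξ i) := funext fun ξ => Finset.prod_mul_distrib.symm
  have hden : meanS ℓ (fun ξ => (∏ i, Ei i (ξ i)) * (∏ i, ψi i (ξ i)))
      = ∏ i, mean1 (ℓ i) (F i) := by
    rw [hdenf, meanS_prod ℓ hℓ F hFc]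
  constructor
  · rw [hden]; exact Finset.prod_pos fun i _ => hM i
  intro j
  -- compute the partial derivative of s̃
  have hpd : ∀ ξ : Fin n → ℝ, pd j (fun ζ => μ * Real.log (∏ i, Ei i (ζ i))) ξ
      = μ * (deriv (Ei j) (ξ j) / Ei j (ξ j)) := by
    intro ξ
    unfold pd
    have hCpos : 0 < ∏ i ∈ Finset.univ \ {j}, Ei i (ξ i) :=
      Finset.prod_pos fun i _ => hEipos i (ξ i)
    have hfun : (fun t => μ * Real.log (∏ i, Ei i (Function.update ξ j t i)))
        = fun t => μ * (Real.log (Ei j t) + Real.log (∏ i ∈ Finset.univ \ {j}, Ei i (ξ i))) := by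
      funext t
      have hupd : ∀ i, Ei i (Function.update ξ j t i)
          = Function.update (fun i => Ei i (ξ i)) j (Ei j t) i := by
        intro i
        rcases eq_or_ne i j with rfl | h
        · simp
        · simp [Function.update_of_ne h]
      rw [Finset.prod_congr rfl fun i _ => hupd i,
        Finset.prod_update_of_mem (Finset.mem_univ j),
        Real.log_mul (hEipos j t).ne' hCpos.ne']
    rw [hfun]
    have hE' : HasDerivAt (fun t => Real.log (Ei j t))
        (deriv (Ei j) (ξ j) / Ei j (ξ j)) (ξ j) :=
      (((hEismooth j).differentiable (by simp) (ξ j)).hasDerivAt).log (hEipos j (ξ j)).ne'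
    exact ((hE'.add_const _).const_mul μ).deriv
  set G : Fin n → ℝ → ℝ := Function.update F j (fun y => μ * deriv (Ei j) y * ψi j y) with hG
  have hGc : ∀ i, Continuous (G i) := by
    intro i
    rcases eq_or_ne i j with rfl | h
    · rw [hG, Function.update_self]
      exact (continuous_const.mul ((hEismooth i).continuous_deriv (by simp))).mul
        (hψiC1 i).continuous
    · rw [hG, Function.update_of_ne h]; exact hFc i
  have hnumf : (fun ξ : Fin n → ℝ => (∏ i, Ei i (ξ i)) * (∏ i, ψi i (ξ i)) *
      pd j (fun ζ => μ * Real.log (∏ i, Ei i (ζ i))) ξ) = fun ξ => ∏ i, G i (ξ i) := by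
    funext ξ
    rw [hpd ξ]
    have h1 : ∀ i, G i (ξ i) = Function.update (fun i => F i (ξ i)) j
        (μ * deriv (Ei j) (ξ j) * ψi j (ξ j)) i := by
      intro i
      rcases eq_or_ne i j with rfl | h
      · simp [hG]
      · simp [hG, Function.update_of_ne h]
    rw [Finset.prod_congr rfl fun i _ => h1 i,
      Finset.prod_update_of_mem (Finset.mem_univ j),
      ← Finset.prod_mul_distrib,
      Finset.prod_eq_mul_prod_sdiff_singleton_of_mem (Finset.mem_univ j) (fun i => F i (ξ i))]
    have hEne : Ei j (ξ j) ≠ 0 := (hEipos j (ξ j)).ne'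
    show Ei j (ξ j) * ψi j (ξ j) * (∏ i ∈ Finset.univ \ {j}, F i (ξ i)) *
        (μ * (deriv (Ei j) (ξ j) / Ei j (ξ j)))
      = μ * deriv (Ei j) (ξ j) * ψi j (ξ j) * ∏ i ∈ Finset.univ \ {j}, F i (ξ i)
    field_simp
  have hnum : meanS ℓ (fun ξ => (∏ i, Ei i (ξ i)) * (∏ i, ψi i (ξ i)) *
      pd j (fun ζ => μ * Real.log (∏ i, Ei i (ζ i))) ξ) = ∏ i, mean1 (ℓ i) (G i) := by
    rw [hnumf, meanS_prod ℓ hℓ G hGc]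
  set N : ℝ := mean1 (ℓ j) (fun y => μ * deriv (Ei j) y * ψi j y) with hN
  have hmeanG : (fun i => mean1 (ℓ i) (G i))
      = Function.update (fun i => mean1 (ℓ i) (F i)) j N := by
    funext i
    rcases eq_or_ne i j with rfl | h
    · simp [hG, hN]
    · simp [hG, Function.update_of_ne h]
  have hNval : N = 1 - ub j * mean1 (ℓ j) (F j) :=
    key1 (ℓ j) μ (ub j) (hℓ j) (Ei j) (ψi j) (hEismooth j) (hEipos j) (hψiC1 j)
      (hEiper j) (hψiper j) (hODE j)
  rw [hnum, hden, Finset.prod_congr rfl fun i _ => congrFun hmeanG i,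
    Finset.prod_update_of_mem (Finset.mem_univ j),
    Finset.prod_eq_mul_prod_sdiff_singleton_of_mem (Finset.mem_univ j) (fun i => mean1 (ℓ i) (F i))]
  have hP : 0 < ∏ i ∈ Finset.univ \ {j}, mean1 (ℓ i) (F i) :=
    Finset.prod_pos fun i _ => hM i
  rw [mul_div_mul_right _ _ hP.ne', hNval]
  have hMj : mean1 (ℓ j) (F j) ≠ 0 := (hM j).ne'
  field_simp
  rw [show (mean1 (ℓ j) fun y => Ei j y * ψi j y) = mean1 (ℓ j) (F j) from rfl, mul_sub, mul_one_div_cancel hMj]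
  ring
end
end

section
/- Let ℓ > 0, μ > 0, let E : ℝ → ℝ be C^∞, positive, ℓ-periodic and nonconstant, and for λ > 0 let ψ_λ be the unique ℓ-periodic C¹ solution of λψ − μψ' = 1/E. Then λ⟨Eψ_λ⟩ → ⟨E⟩⟨1/E⟩ as λ → 0⁺; moreover ⟨E⟩⟨1/E⟩ > 1, and hence there exists λ₀ > 0 such that 1/⟨Eψ_λ⟩ < λ for all 0 < λ < λ₀ (the drift is strictly smaller than the imposed slow gradient). -/
open MeasureTheory

noncomputable section

set_option maxHeartbeats 1000000 in
/-- λ⟨Eψ_λ⟩ → ⟨E⟩⟨1/E⟩ as λ → 0⁺; ⟨E⟩⟨1/E⟩ > 1 for nonconstant E;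
hence for all small enough λ > 0 the drift 1/⟨Eψ_λ⟩ is strictly smaller than λ. -/
theorem stmt_12 (ℓ μ : ℝ) (hℓ : 0 < ℓ) (hμ : 0 < μ)
    (E : ℝ → ℝ) (hE : ContDiff ℝ (⊤ : ℕ∞) E) (hEpos : ∀ y, 0 < E y)
    (hEper : Function.Periodic E ℓ) (hEnc : ¬ ∀ x y, E x = E y)
    (Ψ : ℝ → ℝ → ℝ)
    (hΨper : ∀ lam, 0 < lam → Function.Periodic (Ψ lam) ℓ)
    (hΨC1 : ∀ lam, 0 < lam → ContDiff ℝ 1 (Ψ lam))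
    (hΨODE : ∀ lam, 0 < lam → ∀ y, lam * Ψ lam y - μ * deriv (Ψ lam) y = 1 / E y)
    (hΨuniq : ∀ lam, 0 < lam → ∀ ψ' : ℝ → ℝ, Function.Periodic ψ' ℓ → ContDiff ℝ 1 ψ' →
      (∀ y, lam * ψ' y - μ * deriv ψ' y = 1 / E y) → ψ' = Ψ lam) :
    Filter.Tendsto (fun lam => lam * mean1 ℓ (fun y => E y * Ψ lam y))
      (nhdsWithin 0 (Set.Ioi 0)) (nhds (mean1 ℓ E * mean1 ℓ (fun y => 1 / E y))) ∧
    1 < mean1 ℓ E * mean1 ℓ (fun y => 1 / E y) ∧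
    ∃ lam0 : ℝ, 0 < lam0 ∧ ∀ lam, 0 < lam → lam < lam0 →
      1 / mean1 ℓ (fun y => E y * Ψ lam y) < lam := by
  have hℓ0 : (0:ℝ) ≤ ℓ := hℓ.le
  have hℓne : ℓ ≠ 0 := hℓ.ne'
  have hEc : Continuous E := hE.continuous
  have hEne : ∀ y, E y ≠ 0 := fun y => (hEpos y).ne'
  have hIc : Continuous (fun y => 1 / E y) := continuous_const.div hEc hEne
  have hIper : Function.Periodic (fun y => 1 / E y) ℓ := fun x => by simp [hEper x]
  have hne : (Set.Icc (0:ℝ) ℓ).Nonempty := Set.nonempty_Icc.2 hℓ0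
  -- sup and inf of 1/E, sup of E on [0, ℓ]
  obtain ⟨yM, hyM, hM'⟩ := isCompact_Icc.exists_isMaxOn hne hIc.continuousOn
  obtain ⟨ym, hym, hm'⟩ := isCompact_Icc.exists_isMinOn hne hIc.continuousOn
  obtain ⟨yE, hyE, hME'⟩ := isCompact_Icc.exists_isMaxOn hne hEc.continuousOn
  have hM : ∀ z ∈ Set.Icc (0:ℝ) ℓ, 1 / E z ≤ 1 / E yM := fun z hz => hM' hz
  have hm : ∀ z ∈ Set.Icc (0:ℝ) ℓ, 1 / E ym ≤ 1 / E z := fun z hz => hm' hz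
  have hME : ∀ z ∈ Set.Icc (0:ℝ) ℓ, E z ≤ E yE := fun z hz => hME' hz
  set M : ℝ := 1 / E yM with hMdef
  set m : ℝ := 1 / E ym with hmdef
  have hMg : ∀ y, 1 / E y ≤ M := fun y => by
    obtain ⟨z, hz, hzeq⟩ := hIper.exists_mem_Ico₀ hℓ y
    rw [hzeq]; exact hM z (Set.Ico_subset_Icc_self hz)
  have hmg : ∀ y, m ≤ 1 / E y := fun y => by
    obtain ⟨z, hz, hzeq⟩ := hIper.exists_mem_Ico₀ hℓ y
    rw [hzeq]; exact hm z (Set.Ico_subset_Icc_self hz)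
  have hmpos : 0 < m := one_div_pos.2 (hEpos ym)
  have hmM : m ≤ M := le_trans (hmg yM) le_rfl
  set K : ℝ := (M - m) / μ with hKdef
  have hK0 : 0 ≤ K := div_nonneg (by linarith) hμ.le
  have hEyE : 0 < E yE := hEpos yE
  -- the uniform bound, for each lam > 0
  have key : ∀ lam, 0 < lam →
      |lam * mean1 ℓ (fun y => E y * Ψ lam y) - mean1 ℓ E * mean1 ℓ (fun y => 1 / E y)|
        ≤ (E yE * K * ℓ) * lam := by
    intro lam hlam
    set ψ : ℝ → ℝ := Ψ lam with hψdef
    have hψc : Continuous ψ := (hΨC1 lam hlam).continuous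
    have hψd : Differentiable ℝ ψ := (hΨC1 lam hlam).differentiable one_ne_zero
    have hψ'c : Continuous (deriv ψ) := (hΨC1 lam hlam).continuous_deriv le_rfl
    have hψper : Function.Periodic ψ ℓ := hΨper lam hlam
    have hODE : ∀ y, lam * ψ y - μ * deriv ψ y = 1 / E y := hΨODE lam hlam
    -- maximum principle bounds: m ≤ lam * ψ y ≤ M
    obtain ⟨y0, hy0, hy0max'⟩ := isCompact_Icc.exists_isMaxOn hne hψc.continuousOn
    obtain ⟨y1, hy1, hy1min'⟩ := isCompact_Icc.exists_isMinOn hne hψc.continuousOn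
    have hy0max : ∀ z ∈ Set.Icc (0:ℝ) ℓ, ψ z ≤ ψ y0 := fun z hz => hy0max' hz
    have hy1min : ∀ z ∈ Set.Icc (0:ℝ) ℓ, ψ y1 ≤ ψ z := fun z hz => hy1min' hz
    have hgmax : ∀ y, ψ y ≤ ψ y0 := fun y => by
      obtain ⟨z, hz, hzeq⟩ := hψper.exists_mem_Ico₀ hℓ y
      rw [hzeq]; exact hy0max z (Set.Ico_subset_Icc_self hz)
    have hgmin : ∀ y, ψ y1 ≤ ψ y := fun y => by
      obtain ⟨z, hz, hzeq⟩ := hψper.exists_mem_Ico₀ hℓ y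
      rw [hzeq]; exact hy1min z (Set.Ico_subset_Icc_self hz)
    have hloc0 : IsLocalMax ψ y0 := Filter.Eventually.of_forall fun x => hgmax x
    have hloc1 : IsLocalMin ψ y1 := Filter.Eventually.of_forall fun x => hgmin x
    have hd0 : deriv ψ y0 = 0 := hloc0.deriv_eq_zero
    have hd1 : deriv ψ y1 = 0 := hloc1.deriv_eq_zero
    have hub : ∀ y, lam * ψ y ≤ M := fun y => by
      have h0 := hODE y0
      rw [hd0] at h0
      have : lam * ψ y ≤ lam * ψ y0 := by
        exact mul_le_mul_of_nonneg_left (hgmax y) hlam.le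
      calc lam * ψ y ≤ lam * ψ y0 := this
        _ = 1 / E y0 := by linarith
        _ ≤ M := hMg y0
    have hlb : ∀ y, m ≤ lam * ψ y := fun y => by
      have h1 := hODE y1
      rw [hd1] at h1
      have : lam * ψ y1 ≤ lam * ψ y := by
        exact mul_le_mul_of_nonneg_left (hgmin y) hlam.le
      calc m ≤ 1 / E y1 := hmg y1
        _ = lam * ψ y1 := by linarith
        _ ≤ lam * ψ y := this
    -- derivative bound
    have hderiv : ∀ y, |deriv ψ y| ≤ K := fun y => by
      have h := hODE y
      have hd : deriv ψ y = (lam * ψ y - 1 / E y) / μ := by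
        field_simp at h ⊢; linarith
      rw [hd, hKdef, abs_div, abs_of_pos hμ]
      gcongr
      rw [abs_sub_le_iff]
      constructor <;> [linarith [hub y, hmg y]; linarith [hlb y, hMg y]]
    -- Lipschitz estimate on [0, ℓ]
    have hlip : ∀ x ∈ Set.Icc (0:ℝ) ℓ, ∀ y ∈ Set.Icc (0:ℝ) ℓ, |ψ y - ψ x| ≤ K * ℓ := by
      intro x hx y hy
      have hftc : ∫ t in x..y, deriv ψ t = ψ y - ψ x :=
        intervalIntegral.integral_deriv_eq_sub (fun t _ => hψd t)
          (hψ'c.intervalIntegrable x y)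
      rw [← hftc]
      have := intervalIntegral.norm_integral_le_of_norm_le_const
        (f := deriv ψ) (a := x) (b := y) (C := K) (fun t _ => by
          rw [Real.norm_eq_abs]; exact hderiv t)
      rw [Real.norm_eq_abs] at this
      refine this.trans ?_
      have : |y - x| ≤ ℓ := by
        rw [abs_sub_le_iff]
        constructor <;> [linarith [hx.1, hy.2]; linarith [hy.1, hx.2]]
      nlinarith
    -- integral of the ODE over a period
    have hψint : IntervalIntegrable ψ volume 0 ℓ := hψc.intervalIntegrable _ _
    have hmean : lam * ∫ y in (0:ℝ)..ℓ, ψ y = ∫ y in (0:ℝ)..ℓ, 1 / E y := by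
      have hcongr : ∫ y in (0:ℝ)..ℓ, (lam * ψ y - μ * deriv ψ y)
          = ∫ y in (0:ℝ)..ℓ, 1 / E y :=
        intervalIntegral.integral_congr (fun y _ => hODE y)
      rw [intervalIntegral.integral_sub (f := fun y => lam * ψ y) (g := fun y => μ * deriv ψ y)
          ((continuous_const.mul hψc).intervalIntegrable _ _)
          ((continuous_const.mul hψ'c).intervalIntegrable _ _),
        intervalIntegral.integral_const_mul, intervalIntegral.integral_const_mul,
        intervalIntegral.integral_deriv_eq_sub (fun t _ => hψd t)
          (hψ'c.intervalIntegrable _ _)] at hcongr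
      have hper0 : ψ ℓ = ψ 0 := by simpa using hψper 0
      rw [hper0] at hcongr
      linarith [hcongr]
    -- pointwise estimate: |lam * ψ y - mean1 ℓ (1/E)| ≤ lam * K * ℓ on [0, ℓ]
    set A : ℝ := mean1 ℓ (fun y => 1 / E y) with hAdef
    have hAeq : A = lam * ((1/ℓ) * ∫ x in (0:ℝ)..ℓ, ψ x) := by
      rw [hAdef, mean1, ← hmean]; ring
    have hpt : ∀ y ∈ Set.Icc (0:ℝ) ℓ, |lam * ψ y - A| ≤ lam * (K * ℓ) := by
      intro y hy
      have hrepr : ψ y - (1/ℓ) * ∫ x in (0:ℝ)..ℓ, ψ x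
          = (1/ℓ) * ∫ x in (0:ℝ)..ℓ, (ψ y - ψ x) := by
        rw [intervalIntegral.integral_sub (intervalIntegrable_const) hψint,
          intervalIntegral.integral_const]
        field_simp
        ring
      have hbnd : |∫ x in (0:ℝ)..ℓ, (ψ y - ψ x)| ≤ (K * ℓ) * |ℓ - 0| := by
        have := intervalIntegral.norm_integral_le_of_norm_le_const
          (f := fun x => ψ y - ψ x) (a := (0:ℝ)) (b := ℓ) (C := K * ℓ) (fun t ht => by
            rw [Real.norm_eq_abs]
            have ht' : t ∈ Set.Icc (0:ℝ) ℓ := by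
              rw [Set.uIoc_of_le hℓ0] at ht
              exact Set.Ioc_subset_Icc_self ht
            have h2' := hlip t ht' y hy
            simpa using h2')
        rwa [Real.norm_eq_abs] at this
      have h2 : |ψ y - (1/ℓ) * ∫ x in (0:ℝ)..ℓ, ψ x| ≤ K * ℓ := by
        rw [hrepr, abs_mul, abs_of_pos (one_div_pos.2 hℓ)]
        have : (1/ℓ) * |∫ x in (0:ℝ)..ℓ, (ψ y - ψ x)| ≤ (1/ℓ) * ((K * ℓ) * |ℓ - 0|) :=
          mul_le_mul_of_nonneg_left hbnd (one_div_pos.2 hℓ).le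
        refine this.trans ?_
        rw [abs_of_nonneg (by linarith : (0:ℝ) ≤ ℓ - 0)]
        rw [div_mul_eq_mul_div, one_mul]
        rw [div_le_iff₀ hℓ]
        ring_nf
        nlinarith [mul_nonneg hK0 hℓ0]
      calc |lam * ψ y - A| = lam * |ψ y - (1/ℓ) * ∫ x in (0:ℝ)..ℓ, ψ x| := by
            rw [hAeq, ← mul_sub, abs_mul, abs_of_pos hlam]
        _ ≤ lam * (K * ℓ) := mul_le_mul_of_nonneg_left h2 hlam.le
    -- final integral bound
    have hsplit : lam * mean1 ℓ (fun y => E y * ψ y) - mean1 ℓ E * A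
        = (1/ℓ) * ∫ y in (0:ℝ)..ℓ, E y * (lam * ψ y - A) := by
      have : (fun y => E y * (lam * ψ y - A)) = fun y => lam * (E y * ψ y) - A * E y := by
        funext y; ring
      rw [this, intervalIntegral.integral_sub (f := fun y => lam * (E y * ψ y)) (g := fun y => A * E y)
          ((continuous_const.mul (hEc.mul hψc)).intervalIntegrable _ _)
          ((continuous_const.mul hEc).intervalIntegrable _ _),
        intervalIntegral.integral_const_mul, intervalIntegral.integral_const_mul]
      simp only [mean1]
      ring
    rw [hsplit]
    have hbnd2 : |∫ y in (0:ℝ)..ℓ, E y * (lam * ψ y - A)| ≤ (E yE * (lam * (K * ℓ))) * |ℓ - 0| := by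
      have := intervalIntegral.norm_integral_le_of_norm_le_const
        (f := fun y => E y * (lam * ψ y - A)) (a := (0:ℝ)) (b := ℓ)
        (C := E yE * (lam * (K * ℓ))) (fun t ht => by
          have ht' : t ∈ Set.Icc (0:ℝ) ℓ := by
            rw [Set.uIoc_of_le hℓ0] at ht
            exact Set.Ioc_subset_Icc_self ht
          rw [Real.norm_eq_abs, abs_mul, abs_of_pos (hEpos t)]
          exact mul_le_mul (hME t ht') (hpt t ht') (abs_nonneg _) hEyE.le)
      rwa [Real.norm_eq_abs] at this
    rw [abs_mul, abs_of_pos (one_div_pos.2 hℓ)]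
    have := mul_le_mul_of_nonneg_left hbnd2 (one_div_pos.2 hℓ).le
    refine this.trans ?_
    rw [abs_of_nonneg (by linarith : (0:ℝ) ≤ ℓ - 0)]
    rw [div_mul_eq_mul_div, one_mul, div_le_iff₀ hℓ]
    ring_nf
    nlinarith [mul_nonneg (mul_nonneg hEyE.le hK0) hℓ0, sq_nonneg ℓ]
  -- part 1: the limit
  set L : ℝ := mean1 ℓ E * mean1 ℓ (fun y => 1 / E y) with hLdef
  have hT : Filter.Tendsto (fun lam => lam * mean1 ℓ (fun y => E y * Ψ lam y))
      (nhdsWithin 0 (Set.Ioi 0)) (nhds L) := by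
    have hg : Filter.Tendsto (fun lam : ℝ => (E yE * K * ℓ) * lam)
        (nhdsWithin 0 (Set.Ioi 0)) (nhds 0) := by
      have hcont : Continuous (fun lam : ℝ => (E yE * K * ℓ) * lam) :=
        continuous_const.mul continuous_id
      have h := (hcont.tendsto 0).mono_left
        (nhdsWithin_le_nhds (s := Set.Ioi (0:ℝ)) (a := (0:ℝ)))
      simpa using h
    have h0 : Filter.Tendsto
        (fun lam => lam * mean1 ℓ (fun y => E y * Ψ lam y) - L)
        (nhdsWithin 0 (Set.Ioi 0)) (nhds 0) := by
      apply squeeze_zero_norm' _ hg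
      exact Filter.eventually_of_mem self_mem_nhdsWithin fun lam hlam => by
        rw [Real.norm_eq_abs]; exact key lam hlam
    have := h0.add_const L
    simpa using this
  -- part 2: 1 < ⟨E⟩⟨1/E⟩
  have hMean : ∀ f : ℝ → ℝ, (∫ y in (0:ℝ)..ℓ, f y) = ℓ * mean1 ℓ f := fun f => by
    rw [mean1]; field_simp
  set cE : ℝ := mean1 ℓ E with hcEdef
  have hintE : 0 < ∫ y in (0:ℝ)..ℓ, E y :=
    intervalIntegral.intervalIntegral_pos_of_pos (hEc.intervalIntegrable _ _) hEpos hℓ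
  have hcE : 0 < cE := by
    rw [hcEdef, mean1]; positivity
  have hgid : ∀ y, 1 / E y - 2 / cE + E y * (cE^2)⁻¹ = (E y - cE)^2 / (E y * cE^2) := fun y => by
    field_simp [hEne y, hcE.ne']
    ring
  have hgnn : ∀ y, 0 ≤ 1 / E y - 2 / cE + E y * (cE^2)⁻¹ := fun y => by
    rw [hgid y]
    exact div_nonneg (sq_nonneg _) (mul_pos (hEpos y) (pow_pos hcE 2)).le
  obtain ⟨y0, hy0⟩ : ∃ y, E y ≠ cE := by
    by_contra h
    push_neg at h
    exact hEnc fun x y => (h x).trans (h y).symm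
  obtain ⟨z, hz, hzeq⟩ := hEper.exists_mem_Ico₀ hℓ y0
  have hzne : E z ≠ cE := by rw [← hzeq]; exact hy0
  have hgz : 0 < 1 / E z - 2 / cE + E z * (cE^2)⁻¹ := by
    rw [hgid z]
    have h1 : E z - cE ≠ 0 := sub_ne_zero.2 hzne
    have h2 : 0 < (E z - cE)^2 := lt_of_le_of_ne (sq_nonneg _) (Ne.symm (pow_ne_zero 2 h1))
    exact div_pos h2 (mul_pos (hEpos z) (pow_pos hcE 2))
  have hintg : 0 < ∫ y in (0:ℝ)..ℓ, (1 / E y - 2 / cE + E y * (cE^2)⁻¹) := by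
    apply intervalIntegral.integral_pos hℓ
    · exact (((hIc.sub continuous_const).add (hEc.mul continuous_const)).continuousOn)
    · exact fun x _ => hgnn x
    · exact ⟨z, Set.Ico_subset_Icc_self hz, hgz⟩
  have hexp : (∫ y in (0:ℝ)..ℓ, (1 / E y - 2 / cE + E y * (cE^2)⁻¹))
      = (∫ y in (0:ℝ)..ℓ, 1 / E y) - ℓ * (2 / cE) + (∫ y in (0:ℝ)..ℓ, E y) * (cE^2)⁻¹ := by
    rw [intervalIntegral.integral_add (f := fun y => 1 / E y - 2 / cE) (g := fun y => E y * (cE^2)⁻¹)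
        ((hIc.sub continuous_const).intervalIntegrable _ _)
        ((hEc.mul continuous_const).intervalIntegrable _ _),
      intervalIntegral.integral_sub (f := fun y => 1 / E y) (g := fun _ => 2 / cE) (hIc.intervalIntegrable _ _) intervalIntegrable_const,
      intervalIntegral.integral_const, intervalIntegral.integral_mul_const]
    simp [smul_eq_mul]
  have hIeq : (∫ y in (0:ℝ)..ℓ, 1 / E y) = ℓ * mean1 ℓ (fun y => 1 / E y) := hMean _
  have hEeq : (∫ y in (0:ℝ)..ℓ, E y) = ℓ * cE := hMean E
  rw [hexp, hIeq, hEeq] at hintg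
  set A : ℝ := mean1 ℓ (fun y => 1 / E y) with hAdef
  have hkey2 : ℓ * A - ℓ * (2 / cE) + ℓ * cE * (cE^2)⁻¹ = ℓ * (A - 1/cE) := by
    field_simp
    ring
  rw [hkey2] at hintg
  have hApos : 1 / cE < A := by nlinarith
  have h1lt : 1 < cE * A := by
    rw [div_lt_iff₀ hcE] at hApos
    linarith [mul_comm A cE]
  refine ⟨hT, h1lt, ?_⟩
  -- part 3
  have hev : ∀ᶠ lam in nhdsWithin (0:ℝ) (Set.Ioi 0),
      1 < lam * mean1 ℓ (fun y => E y * Ψ lam y) := hT.eventually (lt_mem_nhds h1lt)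
  rw [eventually_nhdsWithin_iff, Metric.eventually_nhds_iff] at hev
  obtain ⟨ε, hε, hball⟩ := hev
  refine ⟨ε, hε, fun lam hl1 hl2 => ?_⟩
  have hdist : dist lam 0 < ε := by
    rw [Real.dist_eq, sub_zero, abs_of_pos hl1]; exact hl2
  have h1 : 1 < lam * mean1 ℓ (fun y => E y * Ψ lam y) := hball hdist (Set.mem_Ioi.2 hl1)
  have hMψpos : 0 < mean1 ℓ (fun y => E y * Ψ lam y) := by
    by_contra hn
    push_neg at hn
    nlinarith [h1, hn, hl1]
  rw [div_lt_iff₀ hMψpos]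
  linarith [mul_comm lam (mean1 ℓ (fun y => E y * Ψ lam y))]
end
end

section
/- Let ℓ > 0 and let h : ℝ → ℝ be continuous, ℓ-periodic and nonconstant. Then for every real r with 0 < r < sup h − inf h, one has e^{Ar} / (⟨e^{Ah}⟩⟨e^{−Ah}⟩) → 0 as A → +∞; that is, the product ⟨e^{Ah}⟩⟨e^{−Ah}⟩ grows faster than e^{Ar} for every r below the oscillation of h. -/
open MeasureTheory

noncomputable section

/-- Key lower bound: if a continuous ℓ-periodic f is ≥ L on an interval [a,b] of
length ≤ ℓ, then ∫₀^ℓ exp(f) ≥ (b-a)·exp L. -/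
lemma key_lb (ℓ : ℝ) (f : ℝ → ℝ) (hf : Continuous f)
    (hper : Function.Periodic f ℓ) (a b L : ℝ) (hab : a ≤ b) (hba : b ≤ a + ℓ)
    (hL : ∀ y ∈ Set.Icc a b, L ≤ f y) :
    (b - a) * Real.exp L ≤ ∫ y in (0:ℝ)..ℓ, Real.exp (f y) := by
  have hper' : Function.Periodic (fun y => Real.exp (f y)) ℓ := fun x => by
    simp [hper x]
  have hcont : Continuous fun y => Real.exp (f y) := Real.continuous_exp.comp hf
  have h1 : (∫ y in (0:ℝ)..ℓ, Real.exp (f y)) = ∫ y in a..(a+ℓ), Real.exp (f y) := by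
    have := hper'.intervalIntegral_add_eq a 0
    simpa using this.symm
  rw [h1]
  have hi1 : IntervalIntegrable (fun y => Real.exp (f y)) volume a b :=
    hcont.intervalIntegrable _ _
  have hi2 : IntervalIntegrable (fun y => Real.exp (f y)) volume b (a+ℓ) :=
    hcont.intervalIntegrable _ _
  have hadd := intervalIntegral.integral_add_adjacent_intervals hi1 hi2
  have h2 : (0:ℝ) ≤ ∫ y in b..(a+ℓ), Real.exp (f y) :=
    intervalIntegral.integral_nonneg hba (fun x _ => (Real.exp_pos _).le)
  have h3 : (b - a) * Real.exp L ≤ ∫ y in a..b, Real.exp (f y) := by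
    have := intervalIntegral.integral_mono_on (μ := volume) hab
      (intervalIntegrable_const) hi1
      (fun x hx => Real.exp_le_exp.2 (hL x hx))
    simpa [smul_eq_mul, mul_comm] using this
  linarith

/-- for continuous nonconstant ℓ-periodic h and every r below the
oscillation of h, e^{Ar}/(⟨e^{Ah}⟩⟨e^{−Ah}⟩) → 0 as A → +∞. -/
theorem stmt_13 (ℓ : ℝ) (hℓ : 0 < ℓ)
    (h : ℝ → ℝ) (hc : Continuous h) (hper : Function.Periodic h ℓ)
    (hnc : ¬ ∀ x y, h x = h y) :
    ∀ r : ℝ, 0 < r → r < sSup (Set.range h) - sInf (Set.range h) →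
      Filter.Tendsto (fun A : ℝ =>
          Real.exp (A * r) /
            (mean1 ℓ (fun y => Real.exp (A * h y)) *
              mean1 ℓ (fun y => Real.exp (-A * h y))))
        Filter.atTop (nhds 0) := by
  intro r hr hros
  set M := sSup (Set.range h) with hM
  set m := sInf (Set.range h) with hm
  set δ : ℝ := (M - m - r) / 3 with hδdef
  have hδ : 0 < δ := by simp only [hδdef]; linarith
  have hne : (Set.range h).Nonempty := ⟨h 0, Set.mem_range_self 0⟩
  -- point near the sup
  obtain ⟨v, ⟨x₀, hx₀⟩, hv⟩ := exists_lt_of_lt_csSup hne (show M - δ < M by linarith)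
  -- point near the inf
  obtain ⟨w, ⟨x₁, hx₁⟩, hw⟩ := exists_lt_of_csInf_lt hne (show m < m + δ by linarith)
  -- neighborhood near x₀ where h > M - δ
  have hU : IsOpen (h ⁻¹' Set.Ioi (M - δ)) := (isOpen_Ioi).preimage hc
  have hx₀U : x₀ ∈ h ⁻¹' Set.Ioi (M - δ) := by simp [Set.mem_preimage, hx₀ ▸ hv]
  obtain ⟨η, hη, hball⟩ := Metric.isOpen_iff.1 hU x₀ hx₀U
  have hV : IsOpen (h ⁻¹' Set.Iio (m + δ)) := (isOpen_Iio).preimage hc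
  have hx₁V : x₁ ∈ h ⁻¹' Set.Iio (m + δ) := by simp [Set.mem_preimage, hx₁ ▸ hw]
  obtain ⟨η', hη', hball'⟩ := Metric.isOpen_iff.1 hV x₁ hx₁V
  set t : ℝ := min (η / 2) (ℓ / 2) with ht_def
  have ht : 0 < t := lt_min (by linarith) (by linarith)
  set s : ℝ := min (η' / 2) (ℓ / 2) with hs_def
  have hs : 0 < s := lt_min (by linarith) (by linarith)
  have hIcc₀ : ∀ y ∈ Set.Icc (x₀ - t) (x₀ + t), M - δ ≤ h y := by
    intro y hy
    have : y ∈ Metric.ball x₀ η := by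
      rw [Metric.mem_ball, Real.dist_eq]
      have h1 : t ≤ η / 2 := min_le_left _ _
      rcases hy with ⟨h2, h3⟩
      rw [abs_sub_lt_iff]; constructor <;> linarith
    exact (hball this).le
  have hIcc₁ : ∀ y ∈ Set.Icc (x₁ - s) (x₁ + s), h y ≤ m + δ := by
    intro y hy
    have : y ∈ Metric.ball x₁ η' := by
      rw [Metric.mem_ball, Real.dist_eq]
      have h1 : s ≤ η' / 2 := min_le_left _ _
      rcases hy with ⟨h2, h3⟩
      rw [abs_sub_lt_iff]; constructor <;> linarith
    exact (hball' this).le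
  set K : ℝ := (2 * t / ℓ) * (2 * s / ℓ) with hK_def
  have hKpos : 0 < K := by
    apply mul_pos <;> exact div_pos (by linarith) hℓ
  -- the bound on means for A ≥ 0
  have hmean : ∀ A : ℝ, 0 ≤ A →
      K * Real.exp (A * (r + δ)) ≤
        mean1 ℓ (fun y => Real.exp (A * h y)) * mean1 ℓ (fun y => Real.exp (-A * h y)) := by
    intro A hA
    have hb1 : (2 * t) * Real.exp (A * (M - δ)) ≤ ∫ y in (0:ℝ)..ℓ, Real.exp (A * h y) := by
      have := key_lb ℓ (fun y => A * h y) (continuous_const.mul hc)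
        (fun x => by simp [hper x]) (x₀ - t) (x₀ + t) (A * (M - δ))
        (by linarith) (by have : t ≤ ℓ / 2 := min_le_right _ _; linarith)
        (fun y hy => mul_le_mul_of_nonneg_left (hIcc₀ y hy) hA)
      have e : x₀ + t - (x₀ - t) = 2 * t := by ring
      linarith [this, e ▸ this]
    have hb2 : (2 * s) * Real.exp (-A * (m + δ)) ≤ ∫ y in (0:ℝ)..ℓ, Real.exp (-A * h y) := by
      have := key_lb ℓ (fun y => -A * h y) (continuous_const.mul hc)
        (fun x => by simp [hper x]) (x₁ - s) (x₁ + s) (-A * (m + δ))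
        (by linarith) (by have : s ≤ ℓ / 2 := min_le_right _ _; linarith)
        (fun y hy => mul_le_mul_of_nonpos_left (hIcc₁ y hy) (by linarith))
      have e : x₁ + s - (x₁ - s) = 2 * s := by ring
      linarith [this]
    have hm1 : (2 * t / ℓ) * Real.exp (A * (M - δ)) ≤ mean1 ℓ (fun y => Real.exp (A * h y)) := by
      rw [mean1]
      calc (2 * t / ℓ) * Real.exp (A * (M - δ))
          = (1/ℓ) * ((2 * t) * Real.exp (A * (M - δ))) := by ring
        _ ≤ (1/ℓ) * ∫ y in (0:ℝ)..ℓ, Real.exp (A * h y) :=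
            mul_le_mul_of_nonneg_left hb1 (by positivity)
    have hm2 : (2 * s / ℓ) * Real.exp (-A * (m + δ)) ≤ mean1 ℓ (fun y => Real.exp (-A * h y)) := by
      rw [mean1]
      calc (2 * s / ℓ) * Real.exp (-A * (m + δ))
          = (1/ℓ) * ((2 * s) * Real.exp (-A * (m + δ))) := by ring
        _ ≤ (1/ℓ) * ∫ y in (0:ℝ)..ℓ, Real.exp (-A * h y) :=
            mul_le_mul_of_nonneg_left hb2 (by positivity)
    have hp1 : (0:ℝ) < (2 * t / ℓ) * Real.exp (A * (M - δ)) :=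
      mul_pos (div_pos (by linarith) hℓ) (Real.exp_pos _)
    have hp2 : (0:ℝ) < (2 * s / ℓ) * Real.exp (-A * (m + δ)) :=
      mul_pos (div_pos (by linarith) hℓ) (Real.exp_pos _)
    have he : Real.exp (A * (M - δ)) * Real.exp (-A * (m + δ)) = Real.exp (A * (r + δ)) := by
      rw [← Real.exp_add]; congr 1; rw [hδdef]; ring
    calc K * Real.exp (A * (r + δ))
        = ((2 * t / ℓ) * Real.exp (A * (M - δ))) * ((2 * s / ℓ) * Real.exp (-A * (m + δ))) := by
          rw [hK_def, ← he]; ring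
      _ ≤ mean1 ℓ (fun y => Real.exp (A * h y)) * mean1 ℓ (fun y => Real.exp (-A * h y)) :=
          mul_le_mul hm1 hm2 hp2.le (le_trans hp1.le hm1)
  -- squeeze
  have hKinv : (0:ℝ) < 1 / K := by positivity
  apply squeeze_zero' (g := fun A : ℝ => (1 / K) * Real.exp (-(A * δ)))
  · filter_upwards [Filter.eventually_ge_atTop (0:ℝ)] with A hA
    have hP := hmean A hA
    have hPpos : (0:ℝ) < mean1 ℓ (fun y => Real.exp (A * h y)) * mean1 ℓ (fun y => Real.exp (-A * h y)) :=
      lt_of_lt_of_le (by positivity) hP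
    positivity
  · filter_upwards [Filter.eventually_ge_atTop (0:ℝ)] with A hA
    have hP := hmean A hA
    have hPpos : (0:ℝ) < mean1 ℓ (fun y => Real.exp (A * h y)) * mean1 ℓ (fun y => Real.exp (-A * h y)) :=
      lt_of_lt_of_le (by positivity) hP
    rw [div_le_iff₀ hPpos]
    have hKK : ((1 / K) * Real.exp (-(A * δ))) * (K * Real.exp (A * (r + δ)))
        = Real.exp (A * r) := by
      rw [show (1/K) * Real.exp (-(A*δ)) * (K * Real.exp (A*(r+δ)))
            = Real.exp (-(A*δ)) * Real.exp (A*(r+δ)) * (K/K) from by ring,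
        div_self hKpos.ne', mul_one, ← Real.exp_add]
      congr 1; ring
    rw [← hKK]
    exact mul_le_mul_of_nonneg_left hP (by positivity)
  · have h1 : Filter.Tendsto (fun A : ℝ => A * δ) Filter.atTop Filter.atTop :=
      Filter.Tendsto.atTop_mul_const hδ Filter.tendsto_id
    have h2 : Filter.Tendsto (fun A : ℝ => Real.exp (-(A * δ))) Filter.atTop (nhds 0) :=
      Real.tendsto_exp_atBot.comp (Filter.tendsto_neg_atTop_atBot.comp h1)
    simpa using h2.const_mul (1 / K)
end
end

section
/- Let ℓ > 0, μ > 0, let E : ℝ → ℝ be C^∞, positive and ℓ-periodic, and for ω > 0 let ψ_ω be the unique ℓ-periodic C¹ solution of ωψ − μψ' = 1/E. Then ⟨Eψ_ω⟩ > 0 for all ω > 0, and there exist constants C > 0 and ω₀ > 0 such that |ω − 1/⟨Eψ_ω⟩| ≤ C/ω for all ω ≥ ω₀; that is, the residual drift c(ω) := ω − 1/⟨Eψ_ω⟩ of a travelling-wave signal of speed ω satisfies c(ω) = O(1/ω) as ω → ∞. -/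
open MeasureTheory

noncomputable section

/-- A continuous periodic function attains a global maximum. -/
lemma per_max {ℓ : ℝ} (hℓ : 0 < ℓ) {f : ℝ → ℝ} (hf : Continuous f)
    (hper : Function.Periodic f ℓ) : ∃ y₀, ∀ y, f y ≤ f y₀ := by
  obtain ⟨y₀, _, hmax⟩ := isCompact_Icc.exists_isMaxOn (s := Set.Icc (0:ℝ) ℓ)
    ⟨0, by simp [hℓ.le]⟩ hf.continuousOn
  refine ⟨y₀, fun y => ?_⟩
  obtain ⟨z, hz, hfz⟩ := hper.exists_mem_Ico₀ hℓ y
  rw [hfz]; exact hmax (Set.Ico_subset_Icc_self hz)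

/-- A continuous periodic function attains a global minimum. -/
lemma per_min {ℓ : ℝ} (hℓ : 0 < ℓ) {f : ℝ → ℝ} (hf : Continuous f)
    (hper : Function.Periodic f ℓ) : ∃ y₀, ∀ y, f y₀ ≤ f y := by
  obtain ⟨y₀, h⟩ := per_max hℓ hf.neg (fun x => by simp only [Pi.neg_apply, hper x])
  exact ⟨y₀, fun y => by have := h y; simpa using this⟩

/-- The integral of the derivative of a `C¹` periodic function over a period vanishes. -/
lemma int_deriv_per {ℓ : ℝ} {g : ℝ → ℝ} (hg : ContDiff ℝ 1 g)
    (hper : Function.Periodic g ℓ) : ∫ y in (0:ℝ)..ℓ, deriv g y = 0 := by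
  rw [intervalIntegral.integral_deriv_eq_sub
    (fun x _ => (hg.differentiable one_ne_zero).differentiableAt)
    (((hg.continuous_deriv le_rfl).intervalIntegrable _ _))]
  have := hper 0
  rw [zero_add] at this
  rw [this, sub_self]

/-- The derivative of a periodic function is periodic. -/
lemma per_deriv {ℓ : ℝ} {f : ℝ → ℝ} (h : Function.Periodic f ℓ) :
    Function.Periodic (deriv f) ℓ := fun x => by
  have h2 : (fun y => f (y + ℓ)) = f := funext h
  rw [← deriv_comp_add_const f ℓ x, h2]

/-- for the unique ℓ-periodic C¹ solutions ψ_ω of ωψ − μψ' = 1/E one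
has ⟨Eψ_ω⟩ > 0, and the residual drift c(ω) = ω − 1/⟨Eψ_ω⟩ is O(1/ω) as ω → ∞. -/
theorem stmt_14 (ℓ μ : ℝ) (hℓ : 0 < ℓ) (hμ : 0 < μ)
    (E : ℝ → ℝ) (hE : ContDiff ℝ (⊤ : ℕ∞) E) (hEpos : ∀ y, 0 < E y)
    (hEper : Function.Periodic E ℓ)
    (Ψ : ℝ → ℝ → ℝ)
    (hΨper : ∀ ω, 0 < ω → Function.Periodic (Ψ ω) ℓ)
    (hΨC1 : ∀ ω, 0 < ω → ContDiff ℝ 1 (Ψ ω))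
    (hΨODE : ∀ ω, 0 < ω → ∀ y, ω * Ψ ω y - μ * deriv (Ψ ω) y = 1 / E y)
    (hΨuniq : ∀ ω, 0 < ω → ∀ ψ' : ℝ → ℝ, Function.Periodic ψ' ℓ → ContDiff ℝ 1 ψ' →
      (∀ y, ω * ψ' y - μ * deriv ψ' y = 1 / E y) → ψ' = Ψ ω) :
    (∀ ω, 0 < ω → 0 < mean1 ℓ (fun y => E y * Ψ ω y)) ∧
    ∃ C : ℝ, 0 < C ∧ ∃ ω0 : ℝ, 0 < ω0 ∧ ∀ ω, ω0 ≤ ω →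
      |ω - 1 / mean1 ℓ (fun y => E y * Ψ ω y)| ≤ C / ω := by
  have hℓne : ℓ ≠ 0 := hℓ.ne'
  have hEc : Continuous E := hE.continuous
  have hEne : ∀ y, E y ≠ 0 := fun y => (hEpos y).ne'
  have hE1 : ContDiff ℝ 1 E := hE.of_le (by simp)
  have hEd : Differentiable ℝ E := hE.differentiable (by simp)
  have hE'cd : ContDiff ℝ (⊤:ℕ∞) (deriv E) := (contDiff_infty_iff_deriv.mp (hE.of_le (by simp))).2
  have hE'1 : ContDiff ℝ 1 (deriv E) := hE'cd.of_le (by simp)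
  have hE'c : Continuous (deriv E) := hE'cd.continuous
  have hE'd : Differentiable ℝ (deriv E) := hE'cd.differentiable (by simp)
  have hE''c : Continuous (deriv (deriv E)) :=
    (contDiff_infty_iff_deriv.mp hE'cd).2.continuous
  have hE'per : Function.Periodic (deriv E) ℓ := per_deriv hEper
  have hE''per : Function.Periodic (deriv (deriv E)) ℓ := per_deriv hE'per
  -- bounds on 1/E
  have hinvc : Continuous fun y => 1 / E y := continuous_const.div hEc hEne
  have hinvper : Function.Periodic (fun y => 1 / E y) ℓ := fun x => by
    simp only [hEper x]
  obtain ⟨yB, hyB⟩ := per_max hℓ hinvc hinvper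
  obtain ⟨yb, hyb⟩ := per_min hℓ hinvc hinvper
  set B : ℝ := 1 / E yB with hBdef
  set b : ℝ := 1 / E yb with hbdef
  have hBpos : 0 < B := div_pos one_pos (hEpos yB)
  have hbpos : 0 < b := div_pos one_pos (hEpos yb)
  -- bound on |E''|
  obtain ⟨yM, hyM⟩ := per_max hℓ hE''c.abs (fun x => by simp only [hE''per x])
  set M : ℝ := |deriv (deriv E) yM| with hMdef
  have hMnn : 0 ≤ M := abs_nonneg _
  set K : ℝ := μ^2 * M * B with hKdef
  have hKnn : 0 ≤ K := by positivity
  have main : ∀ ω, 0 < ω → 0 < mean1 ℓ (fun y => E y * Ψ ω y) ∧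
      |mean1 ℓ (fun y => E y * Ψ ω y) - 1/ω| ≤ K / ω^3 := by
    intro ω hω
    have hωne : ω ≠ 0 := hω.ne'
    have hper := hΨper ω hω
    have hC1 := hΨC1 ω hω
    have hode := hΨODE ω hω
    have hψc : Continuous (Ψ ω) := hC1.continuous
    have hψd : Differentiable ℝ (Ψ ω) := hC1.differentiable one_ne_zero
    have hDψc : Continuous (deriv (Ψ ω)) := hC1.continuous_deriv le_rfl
    -- maximum principle bounds
    obtain ⟨y₀, hy₀⟩ := per_max hℓ hψc hper
    obtain ⟨y₁, hy₁⟩ := per_min hℓ hψc hper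
    have hub : ∀ y, Ψ ω y ≤ B / ω := by
      intro y
      have hd0 : deriv (Ψ ω) y₀ = 0 :=
        IsLocalMax.deriv_eq_zero (Filter.Eventually.of_forall hy₀)
      have h := hode y₀
      rw [hd0, mul_zero, sub_zero] at h
      have h2 : Ψ ω y₀ = (1 / E y₀) / ω := by
        rw [eq_div_iff hωne]; linear_combination h
      calc Ψ ω y ≤ Ψ ω y₀ := hy₀ y
        _ = (1 / E y₀) / ω := h2
        _ ≤ B / ω := by gcongr; exact hyB y₀
    have hlb : ∀ y, b / ω ≤ Ψ ω y := by
      intro y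
      have hd0 : deriv (Ψ ω) y₁ = 0 :=
        IsLocalMin.deriv_eq_zero (Filter.Eventually.of_forall hy₁)
      have h := hode y₁
      rw [hd0, mul_zero, sub_zero] at h
      have h2 : Ψ ω y₁ = (1 / E y₁) / ω := by
        rw [eq_div_iff hωne]; linear_combination h
      calc b / ω ≤ (1 / E y₁) / ω := by gcongr; exact hyb y₁
        _ = Ψ ω y₁ := h2.symm
        _ ≤ Ψ ω y := hy₁ y
    have hψpos : ∀ y, 0 < Ψ ω y := fun y =>
      lt_of_lt_of_le (div_pos hbpos hω) (hlb y)
    have habs : ∀ y, |Ψ ω y| ≤ B / ω := fun y =>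
      abs_le.2 ⟨by nlinarith [hlb y, div_pos hbpos hω, div_pos hBpos hω], hub y⟩
    -- the five integrals
    set S : ℝ := ∫ y in (0:ℝ)..ℓ, E y * Ψ ω y with hSdef
    set I2 : ℝ := ∫ y in (0:ℝ)..ℓ, E y * deriv (Ψ ω) y with hI2def
    set I3 : ℝ := ∫ y in (0:ℝ)..ℓ, deriv E y * Ψ ω y with hI3def
    set I4 : ℝ := ∫ y in (0:ℝ)..ℓ, deriv E y * deriv (Ψ ω) y with hI4def
    set J : ℝ := ∫ y in (0:ℝ)..ℓ, deriv (deriv E) y * Ψ ω y with hJdef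
    set I6 : ℝ := ∫ y in (0:ℝ)..ℓ, deriv E y / E y with hI6def
    -- identity A : ω S = ℓ + μ I2
    have IA : ω * S = ℓ + μ * I2 := by
      have h1 : ∀ y, ω * (E y * Ψ ω y) = 1 + μ * (E y * deriv (Ψ ω) y) := by
        intro y
        have h := hode y
        have h' : E y * (ω * Ψ ω y - μ * deriv (Ψ ω) y) = 1 := by
          rw [h, mul_one_div, div_self (hEne y)]
        linear_combination h'
      have hcong : (∫ y in (0:ℝ)..ℓ, ω * (E y * Ψ ω y)) =
          ∫ y in (0:ℝ)..ℓ, (1 + μ * (E y * deriv (Ψ ω) y)) :=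
        intervalIntegral.integral_congr fun y _ => h1 y
      rw [intervalIntegral.integral_const_mul,
        intervalIntegral.integral_add (f := fun _ => (1:ℝ)) (g := fun y => μ * (E y * deriv (Ψ ω) y)) intervalIntegrable_const
          ((continuous_const.mul (hEc.mul hDψc)).intervalIntegrable _ _),
        intervalIntegral.integral_const_mul, intervalIntegral.integral_const] at hcong
      simpa [hSdef, hI2def] using hcong
    -- identity B : I3 + I2 = 0
    have IB : I3 + I2 = 0 := by
      have hc1 : ContDiff ℝ 1 (fun y => E y * Ψ ω y) := hE1.mul hC1
      have hperp : Function.Periodic (fun y => E y * Ψ ω y) ℓ := fun x => by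
        simp only [hEper x, hper x]
      have h0 := int_deriv_per hc1 hperp
      have hderiv : ∀ y, deriv (fun y => E y * Ψ ω y) y =
          deriv E y * Ψ ω y + E y * deriv (Ψ ω) y := fun y => deriv_mul (hEd y) (hψd y)
      rw [intervalIntegral.integral_congr (fun y _ => hderiv y),
        intervalIntegral.integral_add (f := fun y => deriv E y * Ψ ω y) (g := fun y => E y * deriv (Ψ ω) y) ((hE'c.mul hψc).intervalIntegrable _ _)
          ((hEc.mul hDψc).intervalIntegrable _ _)] at h0
      exact h0
    -- identity C : ω I3 = I6 + μ I4
    have IC : ω * I3 = I6 + μ * I4 := by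
      have h3 : ∀ y, ω * (deriv E y * Ψ ω y) =
          deriv E y / E y + μ * (deriv E y * deriv (Ψ ω) y) := by
        intro y
        have h := hode y
        linear_combination deriv E y * h
      have hcong : (∫ y in (0:ℝ)..ℓ, ω * (deriv E y * Ψ ω y)) =
          ∫ y in (0:ℝ)..ℓ, (deriv E y / E y + μ * (deriv E y * deriv (Ψ ω) y)) :=
        intervalIntegral.integral_congr fun y _ => h3 y
      have hint1 : IntervalIntegrable (fun y => deriv E y / E y) volume 0 ℓ :=
        Continuous.intervalIntegrable (hE'c.div hEc hEne) _ _
      have hint2 : IntervalIntegrable (fun y => μ * (deriv E y * deriv (Ψ ω) y)) volume 0 ℓ :=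
        Continuous.intervalIntegrable (continuous_const.mul (hE'c.mul hDψc)) _ _
      rw [intervalIntegral.integral_const_mul,
        intervalIntegral.integral_add hint1 hint2,
        intervalIntegral.integral_const_mul] at hcong
      exact hcong
    -- identity D : I6 = 0
    have ID : I6 = 0 := by
      have hLc1 : ContDiff ℝ 1 fun t => Real.log (E t) := (hE.of_le (by simp)).log hEne
      have hLper : Function.Periodic (fun t => Real.log (E t)) ℓ := fun x => by
        simp only [hEper x]
      have h0 := int_deriv_per hLc1 hLper
      have hcong : I6 = ∫ y in (0:ℝ)..ℓ, deriv (fun t => Real.log (E t)) y :=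
        intervalIntegral.integral_congr fun y _ =>
          (((hEd y).hasDerivAt.log (hEne y)).deriv).symm
      rw [hcong, h0]
    -- identity E : I4 + J = 0
    have IE : I4 + J = 0 := by
      have hc1 : ContDiff ℝ 1 (fun y => deriv E y * Ψ ω y) := hE'1.mul hC1
      have hperp : Function.Periodic (fun y => deriv E y * Ψ ω y) ℓ := fun x => by
        simp only [hE'per x, hper x]
      have h0 := int_deriv_per hc1 hperp
      have hderiv : ∀ y, deriv (fun y => deriv E y * Ψ ω y) y =
          deriv (deriv E) y * Ψ ω y + deriv E y * deriv (Ψ ω) y := fun y =>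
        deriv_mul (hE'd y) (hψd y)
      rw [intervalIntegral.integral_congr (fun y _ => hderiv y),
        intervalIntegral.integral_add (f := fun y => deriv (deriv E) y * Ψ ω y) (g := fun y => deriv E y * deriv (Ψ ω) y) ((hE''c.mul hψc).intervalIntegrable _ _)
          ((hE'c.mul hDψc).intervalIntegrable _ _)] at h0
      rw [add_comm]
      exact h0
    -- combination: ω² S = ω ℓ + μ² J
    have hS : ω^2 * S = ω * ℓ + μ^2 * J := by
      linear_combination ω * IA + μ * ω * IB - μ * IC - μ * ID - μ^2 * IE
    -- bound on J
    have hJb : |J| ≤ M * (B / ω) * ℓ := by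
      have hb : ∀ y ∈ Set.uIoc (0:ℝ) ℓ, ‖deriv (deriv E) y * Ψ ω y‖ ≤ M * (B / ω) := by
        intro y _
        rw [Real.norm_eq_abs, abs_mul]
        exact mul_le_mul (hyM y) (habs y) (abs_nonneg _) hMnn
      have := intervalIntegral.norm_integral_le_of_norm_le_const hb
      rw [Real.norm_eq_abs] at this
      calc |J| ≤ M * (B / ω) * |ℓ - 0| := this
        _ = M * (B / ω) * ℓ := by rw [sub_zero, abs_of_pos hℓ]
    -- positivity of the mean
    have hSpos : 0 < S := by
      apply intervalIntegral.intervalIntegral_pos_of_pos_on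
        ((hEc.mul hψc).intervalIntegrable _ _) _ hℓ
      intro x _
      exact mul_pos (hEpos x) (hψpos x)
    have hmeanpos : 0 < mean1 ℓ (fun y => E y * Ψ ω y) := by
      unfold mean1
      exact mul_pos (by positivity) hSpos
    refine ⟨hmeanpos, ?_⟩
    have hmean_eq : mean1 ℓ (fun y => E y * Ψ ω y) - 1/ω = μ^2 * J / (ω^2 * ℓ) := by
      have hSval : S = (ω*ℓ + μ^2*J)/ω^2 := by
        rw [eq_div_iff (by positivity : (ω:ℝ)^2 ≠ 0)]; linear_combination hS
      unfold mean1
      rw [← hSdef, hSval]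
      field_simp
      ring
    rw [hmean_eq, abs_div, abs_of_pos (by positivity : (0:ℝ) < ω^2 * ℓ), abs_mul,
      abs_of_nonneg (by positivity : (0:ℝ) ≤ μ^2)]
    rw [div_le_div_iff₀ (by positivity) (by positivity)]
    have h1 : μ^2 * |J| ≤ μ^2 * (M * (B/ω) * ℓ) := by gcongr
    calc μ^2 * |J| * ω^3 ≤ μ^2 * (M * (B/ω) * ℓ) * ω^3 := by gcongr
      _ = K * (ω^2 * ℓ) := by rw [hKdef]; field_simp
  constructor
  · exact fun ω hω => (main ω hω).1
  · refine ⟨2*K + 1, by positivity, 1 + Real.sqrt (2*K), by positivity, ?_⟩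
    intro ω hωge
    have hsq := Real.sqrt_nonneg (2*K)
    have hω : 0 < ω := by linarith
    have hωne : ω ≠ 0 := hω.ne'
    obtain ⟨hmpos, hmb⟩ := main ω hω
    set m : ℝ := mean1 ℓ (fun y => E y * Ψ ω y) with hmdef
    have hω2 : 2*K ≤ ω^2 := by
      have h1 : Real.sqrt (2*K) ≤ ω := by linarith
      nlinarith [Real.sq_sqrt (by positivity : (0:ℝ) ≤ 2*K)]
    have hKω : K/ω^3 ≤ 1/(2*ω) := by
      rw [div_le_div_iff₀ (by positivity) (by positivity)]
      nlinarith
    have habs' := abs_le.1 (hmb.trans hKω)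
    have hhalf : 1/(2*ω) + 1/(2*ω) = 1/ω := by field_simp; norm_num
    have hm_lb : 1/(2*ω) ≤ m := by linarith [habs'.1]
    have heq : ω - 1/m = ω * (m - 1/ω) / m := by
      rw [eq_div_iff hmpos.ne']
      field_simp
    rw [heq, abs_div, abs_mul, abs_of_pos hω, abs_of_pos hmpos]
    calc ω * |m - 1/ω| / m ≤ ω * (K/ω^3) / (1/(2*ω)) :=
        div_le_div₀ (by positivity) (by gcongr) (by positivity) hm_lb
      _ = 2*K/ω := by field_simp
      _ ≤ (2*K + 1)/ω := by gcongr; linarith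
end
end

section
/- Let k > 0, δ₁ ≥ 0, δ₂ ≥ 0, μ > 0, ν > 0, κ₁ > 0, pₑ > 0, a₁₂ > 0, a₂₁ < 0, a₂₂ < 0. For χ ∈ ℝ define the real 3×3 matrix A(χ) := [[−k²δ₁, a₁₂, χ pₑ k²], [a₂₁, a₂₂ − μk², 0], [0, κ₁, −ν − k²δ₂]]. Then there exists a threshold χ₀ > 0 such that for every χ ≥ 0, all complex eigenvalues of A(χ) have negative real part if and only if χ < χ₀; in particular A(0) is Hurwitz stable, and increasing the taxis sensitivity χ through χ₀ produces the onset of instability of the corresponding normal mode. -/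
noncomputable section

/-- A real cubic with positive coefficients has a negative real root. -/
lemma exists_neg_real_root_aux19 (a b c : ℝ) (ha : 0 < a) (hb : 0 < b) (hc : 0 < c) :
    ∃ x : ℝ, x^3 + a*x^2 + b*x + c = 0 ∧ x < 0 := by
  set f : ℝ → ℝ := fun x => x^3 + a*x^2 + b*x + c with hf
  set t : ℝ := 1 + a + b + c with ht
  have ht1 : 1 ≤ t := by linarith
  have hft : f (-t) ≤ 0 := by
    simp only [hf]
    nlinarith [sq_nonneg t, mul_le_mul_of_nonneg_left ht1 (le_of_lt (by nlinarith : (0:ℝ) < t*t))]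
  have hcont : ContinuousOn f (Set.Icc (-t) 0) := by
    apply Continuous.continuousOn; fun_prop
  have hmem : (0:ℝ) ∈ Set.Icc (f (-t)) (f 0) := by
    constructor
    · exact hft
    · simp only [hf]; nlinarith
  have := intermediate_value_Icc (by linarith : (-t) ≤ 0) hcont hmem
  obtain ⟨x, hx, hfx⟩ := this
  refine ⟨x, hfx, ?_⟩
  rcases lt_or_eq_of_le hx.2 with h | h
  · exact h
  · exfalso; subst h; simp only [hf] at hfx; nlinarith

/-- Routh–Hurwitz criterion for a monic real cubic with positive coefficients. -/
lemma cubic_stable_iff_aux19 (a b c : ℝ) (ha : 0 < a) (hb : 0 < b) (hc : 0 < c) :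
    (∀ z : ℂ, z^3 + (a:ℂ)*z^2 + (b:ℂ)*z + (c:ℂ) = 0 → z.re < 0) ↔ c < a*b := by
  constructor
  · intro H
    obtain ⟨x, hx, hxneg⟩ := exists_neg_real_root_aux19 a b c ha hb hc
    set β : ℝ := a + x with hβ
    set γ : ℝ := x^2 + a*x + b with hγ
    set d : ℝ := β^2 - 4*γ with hd
    have hβpos : 0 < β := by
      rcases le_or_gt 0 d with hd0 | hd0
      · set w : ℝ := (-β + Real.sqrt d)/2 with hw
        have hs : Real.sqrt d ^ 2 = d := Real.sq_sqrt hd0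
        have hquad : w^2 + β*w + γ = 0 := by
          simp only [hw]; linear_combination (1/4)*hs + (1/4)*hd
        have hroot : (w:ℂ)^3 + (a:ℂ)*(w:ℂ)^2 + (b:ℂ)*(w:ℂ) + (c:ℂ) = 0 := by
          have hr : w^3 + a*w^2 + b*w + c = 0 := by
            linear_combination (w - x)*hquad + hx - (w^2 - x*w)*hβ - (w - x)*hγ
          exact_mod_cast hr
        have hwneg := H w hroot
        simp only [Complex.ofReal_re] at hwneg
        have hsq : 0 ≤ Real.sqrt d := Real.sqrt_nonneg d
        simp only [hw] at hwneg
        linarith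
      · set s : ℝ := Real.sqrt (-d) with hs0
        have hs : s ^ 2 = -d := Real.sq_sqrt (by linarith)
        set w : ℂ := (↑(-β/2) : ℂ) + (↑(s/2) : ℂ) * Complex.I with hw
        have hscast : (s:ℂ)^2 = -(d:ℂ) := by exact_mod_cast hs
        have hdc : (d:ℂ) = (β:ℂ)^2 - 4*(γ:ℂ) := by exact_mod_cast hd
        have hquad : w^2 + (β:ℂ)*w + (γ:ℂ) = 0 := by
          simp only [hw]
          push_cast
          linear_combination ((s:ℂ)^2/4) * Complex.I_sq - (1/4) * hscast + (1/4) * hdc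
        have hxC : (x:ℂ)^3 + (a:ℂ)*(x:ℂ)^2 + (b:ℂ)*(x:ℂ) + (c:ℂ) = 0 := by
          exact_mod_cast hx
        have hβc : (β:ℂ) = (a:ℂ) + (x:ℂ) := by exact_mod_cast hβ
        have hγc : (γ:ℂ) = (x:ℂ)^2 + (a:ℂ)*(x:ℂ) + (b:ℂ) := by exact_mod_cast hγ
        have hroot : w^3 + (a:ℂ)*w^2 + (b:ℂ)*w + (c:ℂ) = 0 := by
          linear_combination (w - (x:ℂ))*hquad + hxC - (w^2 - (x:ℂ)*w)*hβc - (w - (x:ℂ))*hγc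
        have hwre := H w hroot
        simp only [hw, Complex.add_re, Complex.ofReal_re, Complex.mul_re,
          Complex.I_re, Complex.I_im, Complex.ofReal_im] at hwre
        linarith [hwre]
    have hkey : a*b - c = (a + x)*(b + x^2) := by linear_combination -hx
    have hβ' : 0 < a + x := by rw [← hβ]; exact hβpos
    nlinarith [mul_pos hβ' (by positivity : (0:ℝ) < b + x^2)]
  · intro hcab z hz
    by_cases him : z.im = 0
    · have hzx : z = (z.re : ℂ) := by
        apply Complex.ext <;> simp [him]
      rw [hzx] at hz
      have hre : z.re^3 + a*z.re^2 + b*z.re + c = 0 := by exact_mod_cast hz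
      by_contra h
      push_neg at h
      nlinarith [pow_nonneg h 3, mul_nonneg ha.le (sq_nonneg z.re), mul_nonneg hb.le h]
    · set β : ℝ := -2*z.re with hβ
      set γ : ℝ := z.re^2 + z.im^2 with hγ
      have hquad : z^2 + (β:ℂ)*z + (γ:ℂ) = 0 := by
        apply Complex.ext <;>
          simp [hβ, hγ, Complex.add_re, Complex.add_im, Complex.mul_re, Complex.mul_im,
            pow_two, Complex.ofReal_re, Complex.ofReal_im] <;> ring
      set s : ℝ := a - β with hs
      set u : ℝ := b - γ - β*s with hu
      set v : ℝ := c - γ*s with hv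
      have hsc : (s:ℂ) = (a:ℂ) - (β:ℂ) := by exact_mod_cast hs
      have huc : (u:ℂ) = (b:ℂ) - (γ:ℂ) - (β:ℂ)*(s:ℂ) := by exact_mod_cast hu
      have hvc : (v:ℂ) = (c:ℂ) - (γ:ℂ)*(s:ℂ) := by exact_mod_cast hv
      have huv : (u:ℂ)*z + (v:ℂ) = 0 := by
        linear_combination hz - (z + (s:ℂ))*hquad + z*huc + hvc + z^2*hsc
      have him' : u * z.im = 0 := by
        have h2 := congrArg Complex.im huv
        simpa using h2
      have hu0 : u = 0 := by
        rcases mul_eq_zero.mp him' with h | h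
        · exact h
        · exact absurd h him
      have hv0 : v = 0 := by
        have h3 := congrArg Complex.re huv
        simp [hu0] at h3
        exact h3
      have hγpos : 0 < γ := by
        have h4 : 0 < z.im^2 := by positivity
        simp only [hγ]; nlinarith [sq_nonneg z.re]
      have hc' : c = γ*s := by simp only [hv] at hv0; linarith
      have hspos : 0 < s := by nlinarith
      have hbγ : b = γ + β*s := by simp only [hu] at hu0; linarith
      have hacb : a = β + s := by simp only [hs]; ring
      have hkey : a*b - c = β*(b + s^2) := by rw [hacb, hbγ, hc']; ring
      have hβpos : 0 < β := by
        by_contra hβn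
        push_neg at hβn
        nlinarith [sq_nonneg s]
      simp only [hβ] at hβpos
      linarith

/-- for the normal-mode stability matrix
A(χ) = [[−k²δ₁, a₁₂, χpₑk²],[a₂₁, a₂₂−μk², 0],[0, κ₁, −ν−k²δ₂]] there is a
threshold χ₀ > 0 such that for χ ≥ 0 the matrix A(χ) is Hurwitz stable
(all complex roots of det(λI − A(χ)) have negative real part) iff χ < χ₀. -/
theorem stmt_19 (k δ1 δ2 μ ν κ1 pe a12 a21 a22 : ℝ)
    (hk : 0 < k) (hδ1 : 0 ≤ δ1) (hδ2 : 0 ≤ δ2) (hμ : 0 < μ) (hν : 0 < ν)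
    (hκ1 : 0 < κ1) (hpe : 0 < pe) (ha12 : 0 < a12) (ha21 : a21 < 0) (ha22 : a22 < 0) :
    ∃ χ0 : ℝ, 0 < χ0 ∧ ∀ χ : ℝ, 0 ≤ χ →
      ((∀ lam : ℂ,
          (lam • (1 : Matrix (Fin 3) (Fin 3) ℂ) -
            Matrix.of ![![((-(k ^ 2 * δ1) : ℝ) : ℂ), (a12 : ℂ), ((χ * pe * k ^ 2 : ℝ) : ℂ)],
                        ![(a21 : ℂ), ((a22 - μ * k ^ 2 : ℝ) : ℂ), 0],
                        ![0, (κ1 : ℂ), ((-ν - k ^ 2 * δ2 : ℝ) : ℂ)]]).det = 0 →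
          lam.re < 0)
        ↔ χ < χ0) := by
  have hk2 : 0 < k^2 := by positivity
  obtain ⟨A1, hA1⟩ : ∃ x : ℝ, x = k^2*δ1 := ⟨_, rfl⟩
  obtain ⟨E, hE⟩ : ∃ x : ℝ, x = μ*k^2 - a22 := ⟨_, rfl⟩
  obtain ⟨G, hG⟩ : ∃ x : ℝ, x = ν + k^2*δ2 := ⟨_, rfl⟩
  have hA1n : 0 ≤ A1 := by rw [hA1]; positivity
  have hEp : 0 < E := by rw [hE]; nlinarith
  have hGp : 0 < G := by rw [hG]; nlinarith [mul_nonneg hk2.le hδ2]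
  obtain ⟨aa, haa⟩ : ∃ x : ℝ, x = A1 + E + G := ⟨_, rfl⟩
  obtain ⟨bb, hbb⟩ : ∃ x : ℝ, x = A1*E + A1*G + E*G - a12*a21 := ⟨_, rfl⟩
  obtain ⟨cC, hcC⟩ : ∃ x : ℝ, x = A1*E*G - a12*a21*G := ⟨_, rfl⟩
  obtain ⟨dd, hdd⟩ : ∃ x : ℝ, x = -(pe*k^2*a21*κ1) := ⟨_, rfl⟩
  have haap : 0 < aa := by rw [haa]; linarith
  have hbbp : 0 < bb := by
    rw [hbb]
    nlinarith [mul_nonneg hA1n hEp.le, mul_nonneg hA1n hGp.le, mul_pos hEp hGp,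
      mul_pos_of_neg_of_neg ha21 (neg_neg_of_pos ha12)]
  have hcCp : 0 < cC := by
    rw [hcC]
    nlinarith [mul_nonneg (mul_nonneg hA1n hEp.le) hGp.le, mul_pos ha12 hGp]
  have hddp : 0 < dd := by
    rw [hdd]
    nlinarith [mul_pos (mul_pos hpe hk2) hκ1]
  have habc : cC < aa*bb := by
    have h1 : 0 < A1 + E := by linarith
    have hkey : aa*bb - cC = (A1+E)*bb + G^2*(A1+E) := by
      rw [haa, hbb, hcC]; ring
    nlinarith [mul_pos h1 hbbp, mul_pos (mul_pos hGp hGp) h1]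
  refine ⟨(aa*bb - cC)/dd, div_pos (by linarith) hddp, fun χ hχ => ?_⟩
  have hdet : ∀ lam : ℂ,
      (lam • (1 : Matrix (Fin 3) (Fin 3) ℂ) -
        Matrix.of ![![((-(k ^ 2 * δ1) : ℝ) : ℂ), (a12 : ℂ), ((χ * pe * k ^ 2 : ℝ) : ℂ)],
                    ![(a21 : ℂ), ((a22 - μ * k ^ 2 : ℝ) : ℂ), 0],
                    ![0, (κ1 : ℂ), ((-ν - k ^ 2 * δ2 : ℝ) : ℂ)]]).det
      = lam^3 + (aa:ℂ)*lam^2 + (bb:ℂ)*lam + ((cC + χ*dd : ℝ):ℂ) := by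
    intro lam
    rw [haa, hbb, hcC, hdd, hA1, hE, hG]
    simp [Matrix.det_fin_three, Matrix.smul_apply, Matrix.one_apply, Matrix.sub_apply]
    push_cast
    ring
  have hcχ : 0 < cC + χ*dd := by nlinarith [mul_nonneg hχ hddp.le]
  have hiff := cubic_stable_iff_aux19 aa bb (cC + χ*dd) haap hbbp hcχ
  calc (∀ lam : ℂ,
      (lam • (1 : Matrix (Fin 3) (Fin 3) ℂ) -
        Matrix.of ![![((-(k ^ 2 * δ1) : ℝ) : ℂ), (a12 : ℂ), ((χ * pe * k ^ 2 : ℝ) : ℂ)],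
                    ![(a21 : ℂ), ((a22 - μ * k ^ 2 : ℝ) : ℂ), 0],
                    ![0, (κ1 : ℂ), ((-ν - k ^ 2 * δ2 : ℝ) : ℂ)]]).det = 0 →
      lam.re < 0)
      ↔ (∀ z : ℂ, z^3 + (aa:ℂ)*z^2 + (bb:ℂ)*z + ((cC + χ*dd : ℝ):ℂ) = 0 → z.re < 0) := by
        apply forall_congr'
        intro lam
        rw [hdet lam]
    _ ↔ cC + χ*dd < aa*bb := hiff
    _ ↔ χ < (aa*bb - cC)/dd := by
        rw [lt_div_iff₀ hddp]
        constructor <;> intro h <;> linarith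
end
end
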